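/- arXiv:2512.07046 — 7 statements merged into one kernel-verified Lean document; each statement's English description precedes it below -/
import Mathlib

section
/- Let T>0, B ∈ ℝ^{n×m}, and Σ_init, Σ_fin ∈ S₊ⁿ. Define Σ_t := (1 − t/T)Σ_init + (t/T)Σ_fin for t ∈ [0,T] and A_t := ½(Σ̇_t − BBᵀ)Σ_t^{−1}, where Σ̇_t = (Σ_fin − Σ_init)/T. Then Σ_t is symmetric positive definite for every t ∈ [0,T], both A and Σ are continuously differentiable on [0,T], and the pair satisfies Σ̇_t = A_tΣ_t + Σ_tA_tᵀ + BBᵀ for all t ∈ [0,T] as well as Σ_0 = Σ_init and Σ_T = Σ_fin. Consequently, for every α ∈ [0,1], J_α(A,Σ) is finite. -/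
/-!
On `[0, T]` the interpolant `Σ_t` is a convex combination of two positive definite matrices,
hence positive definite and invertible, so `A_t` is as smooth as matrix inversion, and `Ȧ_t`
comes from `d(Σ⁻¹) = -Σ⁻¹ Σ̇ Σ⁻¹`. The Lyapunov equation holds because
`A_t Σ_t = ½(Σ̇ − BBᵀ)` is symmetric, so `A_t Σ_t + Σ_t A_tᵀ = Σ̇ − BBᵀ`. Both integrands
of `J_α` are continuous on the compact interval `[0, T]`, hence integrable.
-/

open MeasureTheory Matrix Set

/-- The linear interpolation `Σ_t = (1 − t/T)Σ_init + (t/T)Σ_fin`. -/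
noncomputable def interpS {n : ℕ} (T : ℝ) (Si Sf : Matrix (Fin n) (Fin n) ℝ) :
    ℝ → Matrix (Fin n) (Fin n) ℝ :=
  fun t => (1 - t / T) • Si + (t / T) • Sf

/-- The constant derivative `Σ̇_t = (Σ_fin − Σ_init)/T` of the linear interpolation. -/
noncomputable def interpSd {n : ℕ} (T : ℝ) (Si Sf : Matrix (Fin n) (Fin n) ℝ) :
    Matrix (Fin n) (Fin n) ℝ :=
  (1 / T) • (Sf - Si)

/-- The control `A_t = ½(Σ̇_t − BBᵀ)Σ_t⁻¹` inducing the linear interpolation. -/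
noncomputable def interpA {n m : ℕ} (T : ℝ) (B : Matrix (Fin n) (Fin m) ℝ)
    (Si Sf : Matrix (Fin n) (Fin n) ℝ) : ℝ → Matrix (Fin n) (Fin n) ℝ :=
  fun t => (1 / 2 : ℝ) • ((interpSd T Si Sf - B * Bᵀ) * (interpS T Si Sf t)⁻¹)

/-- The time derivative `Ȧ_t = −½(Σ̇ − BBᵀ)Σ_t⁻¹Σ̇Σ_t⁻¹` of the control. -/
noncomputable def interpAd {n m : ℕ} (T : ℝ) (B : Matrix (Fin n) (Fin m) ℝ)
    (Si Sf : Matrix (Fin n) (Fin n) ℝ) : ℝ → Matrix (Fin n) (Fin n) ℝ :=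
  fun t => (-(1 / 2) : ℝ) •
    ((interpSd T Si Sf - B * Bᵀ) * (interpS T Si Sf t)⁻¹ * interpSd T Si Sf *
      (interpS T Si Sf t)⁻¹)

namespace Matrix

open scoped ComplexOrder in
theorem PosDef.smul_add_smul {ι 𝕜 : Type*} [Fintype ι] [RCLike 𝕜] {A B : Matrix ι ι 𝕜}
    (hA : A.PosDef) (hB : B.PosDef) {a b : ℝ} (ha : 0 ≤ a) (hb : 0 ≤ b) (hab : 0 < a + b) :
    (a • A + b • B).PosDef := by
  rcases ha.lt_or_eq with ha | rfl
  · exact (hA.smul ha).add_posSemidef (hB.posSemidef.smul hb)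
  · exact PosDef.posSemidef_add (hA.posSemidef.smul le_rfl) (hB.smul (by simpa using hab))

theorem half_mul_inv_lyapunov {ι K : Type*} [Fintype ι] [DecidableEq ι] [Field K]
    [NeZero (2 : K)] {S C : Matrix ι ι K} (hS : S.IsSymm) (hSu : IsUnit S) (hC : C.IsSymm) :
    (1 / 2 : K) • (C * S⁻¹) * S + S * ((1 / 2 : K) • (C * S⁻¹))ᵀ = C := by
  have hdet : IsUnit S.det := (isUnit_iff_isUnit_det S).mp hSu
  rw [transpose_smul, transpose_mul, transpose_nonsing_inv, hS.eq, hC.eq, Matrix.smul_mul,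
    mul_assoc, nonsing_inv_mul _ hdet, Matrix.mul_smul, ← mul_assoc, mul_nonsing_inv _ hdet,
    mul_one, one_mul, ← add_smul, add_halves, one_smul]

end Matrix

section

-- Matrices carry no global norm; every norm induces the product topology, so any will do.
attribute [local instance] Matrix.linftyOpNormedAddCommGroup Matrix.linftyOpNormedSpace
  Matrix.linftyOpNormedRing Matrix.linftyOpNormedAlgebra

section

variable {𝕜 : Type*} [RCLike 𝕜] {ι : Type*} [Fintype ι]

theorem HasDerivAt.matrix_entry {f : 𝕜 → Matrix ι ι 𝕜} {f' : Matrix ι ι 𝕜} {t : 𝕜}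
    (hf : HasDerivAt f f' t) (i j : ι) : HasDerivAt (fun s => f s i j) (f' i j) t :=
  (LinearMap.toContinuousLinearMap (entryLinearMap 𝕜 𝕜 i j)).hasFDerivAt.comp_hasDerivAt t hf

theorem ContDiffAt.matrix_entry {E : Type*} [NormedAddCommGroup E] [NormedSpace 𝕜 E]
    {f : E → Matrix ι ι 𝕜} {x : E} {k : WithTop ℕ∞} (hf : ContDiffAt 𝕜 k f x)
    (i j : ι) : ContDiffAt 𝕜 k (fun y => f y i j) x :=
  (LinearMap.toContinuousLinearMap (entryLinearMap 𝕜 𝕜 i j)).contDiff.contDiffAt.comp x hf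

variable [DecidableEq ι]

theorem HasDerivAt.matrix_inv {f : 𝕜 → Matrix ι ι 𝕜} {f' : Matrix ι ι 𝕜} {t : 𝕜}
    (hf : HasDerivAt f f' t) (ht : IsUnit (f t)) :
    HasDerivAt (fun s => (f s)⁻¹) (-((f t)⁻¹ * f' * (f t)⁻¹)) t := by
  have hinv := hasFDerivAt_ringInverse (𝕜 := 𝕜) ht.unit
  rw [ht.unit_spec, coe_units_inv, ht.unit_spec] at hinv
  have h := hinv.comp_hasDerivAt t hf
  simp only [Function.comp_def, ← nonsing_inv_eq_ringInverse] at h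
  exact h

theorem ContDiffAt.matrix_inv {E : Type*} [NormedAddCommGroup E] [NormedSpace 𝕜 E]
    {f : E → Matrix ι ι 𝕜} {x : E} {k : WithTop ℕ∞} (hf : ContDiffAt 𝕜 k f x)
    (hx : IsUnit (f x)) : ContDiffAt 𝕜 k (fun y => (f y)⁻¹) x := by
  have hinv := contDiffAt_ringInverse 𝕜 (n := k) hx.unit
  rw [hx.unit_spec] at hinv
  have h := hinv.comp x hf
  simp only [Function.comp_def, ← nonsing_inv_eq_ringInverse] at h
  exact h

end

variable {n m : ℕ} {T t : ℝ} {Si Sf : Matrix (Fin n) (Fin n) ℝ}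

theorem interpS_zero : interpS T Si Sf 0 = Si := by
  simp [interpS]

theorem interpS_self (hT : T ≠ 0) : interpS T Si Sf T = Sf := by
  simp [interpS, div_self hT]

theorem interpS_posDef (hT : 0 < T) (hSi : Si.PosDef) (hSf : Sf.PosDef) (ht : t ∈ Icc 0 T) :
    (interpS T Si Sf t).PosDef :=
  hSi.smul_add_smul hSf (sub_nonneg.mpr ((div_le_one hT).mpr ht.2)) (div_nonneg ht.1 hT.le)
    (by rw [sub_add_cancel]; exact one_pos)

theorem interpS_isSymm (hSi : Si.IsSymm) (hSf : Sf.IsSymm) : (interpS T Si Sf t).IsSymm :=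
  (hSi.smul _).add (hSf.smul _)

theorem interpSd_isSymm (hSi : Si.IsSymm) (hSf : Sf.IsSymm) : (interpSd T Si Sf).IsSymm :=
  (hSf.sub hSi).smul _

theorem interpSd_eq_lyapunov (B : Matrix (Fin n) (Fin m) ℝ) (hSi : Si.IsSymm) (hSf : Sf.IsSymm)
    (ht : IsUnit (interpS T Si Sf t)) :
    interpSd T Si Sf = interpA T B Si Sf t * interpS T Si Sf t +
      interpS T Si Sf t * (interpA T B Si Sf t)ᵀ + B * Bᵀ := by
  have hBBt : (B * Bᵀ).IsSymm := by rw [IsSymm, transpose_mul, transpose_transpose]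
  rw [interpA, half_mul_inv_lyapunov (interpS_isSymm hSi hSf) ht
    ((interpSd_isSymm hSi hSf).sub hBBt), sub_add_cancel]

theorem contDiff_interpS_apply {k : WithTop ℕ∞} (i j : Fin n) :
    ContDiff ℝ k (fun t => interpS T Si Sf t i j) := by
  simp only [interpS, Matrix.add_apply, Matrix.smul_apply, smul_eq_mul]
  fun_prop

theorem contDiff_interpS {k : WithTop ℕ∞} : ContDiff ℝ k (interpS T Si Sf) := by
  unfold interpS
  fun_prop

theorem hasDerivAt_interpS : HasDerivAt (interpS T Si Sf) (interpSd T Si Sf) t := by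
  have h_eq : interpS T Si Sf = fun s => Si + (s / T) • (Sf - Si) := by
    ext1 s
    simp only [interpS, sub_smul, one_smul, smul_sub]
    abel
  rw [h_eq]
  exact (((hasDerivAt_id t).div_const T).smul_const (Sf - Si)).const_add Si

theorem hasDerivAt_interpA (B : Matrix (Fin n) (Fin m) ℝ) (ht : IsUnit (interpS T Si Sf t)) :
    HasDerivAt (interpA T B Si Sf) (interpAd T B Si Sf t) t := by
  refine (((hasDerivAt_interpS.matrix_inv ht).const_mul
    (interpSd T Si Sf - B * Bᵀ)).const_smul (1 / 2 : ℝ)).congr_deriv ?_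
  simp only [interpAd, mul_neg, smul_neg, neg_smul, mul_assoc]

theorem contDiffAt_interpA (B : Matrix (Fin n) (Fin m) ℝ) {k : WithTop ℕ∞}
    (ht : IsUnit (interpS T Si Sf t)) : ContDiffAt ℝ k (interpA T B Si Sf) t :=
  (contDiffAt_const.mul (contDiff_interpS.contDiffAt.matrix_inv ht)).const_smul _

theorem continuousOn_interpS_inv (hT : 0 < T) (hSi : Si.PosDef) (hSf : Sf.PosDef) :
    ContinuousOn (fun t => (interpS T Si Sf t)⁻¹) (Icc 0 T) := fun _ hs =>
  (contDiff_interpS.contDiffAt.matrix_inv (k := 0)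
    (interpS_posDef hT hSi hSf hs).isUnit).continuousAt.continuousWithinAt

theorem integrableOn_trace_interpA_mul_transpose (B : Matrix (Fin n) (Fin m) ℝ) (hT : 0 < T)
    (hSi : Si.PosDef) (hSf : Sf.PosDef) :
    IntegrableOn (fun t => trace (interpA T B Si Sf t * (interpA T B Si Sf t)ᵀ)) (Icc 0 T) := by
  have := continuousOn_interpS_inv hT hSi hSf
  refine ContinuousOn.integrableOn_Icc ?_
  unfold interpA
  fun_prop

theorem integrableOn_trace_interpAd_mul_interpS_mul_transpose (B : Matrix (Fin n) (Fin m) ℝ)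
    (hT : 0 < T) (hSi : Si.PosDef) (hSf : Sf.PosDef) :
    IntegrableOn (fun t => trace (interpAd T B Si Sf t * interpS T Si Sf t *
      (interpAd T B Si Sf t)ᵀ)) (Icc 0 T) := by
  have := continuousOn_interpS_inv hT hSi hSf
  refine ContinuousOn.integrableOn_Icc ?_
  unfold interpAd interpS
  fun_prop

end

/-- the linear interpolation of covariances, together with the control
`A_t = ½(Σ̇_t − BBᵀ)Σ_t⁻¹`, is a feasible `C¹` pair for the covariance steering problem,
and both integrands of the attention functional are integrable (so `J_α` is finite). -/
theorem linear_interpolation_feasible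
    {n m : ℕ} (T : ℝ) (hT : 0 < T)
    (B : Matrix (Fin n) (Fin m) ℝ)
    (Si Sf : Matrix (Fin n) (Fin n) ℝ) (hSi : Si.PosDef) (hSf : Sf.PosDef) :
    (∀ t ∈ Icc (0:ℝ) T, (interpS T Si Sf t).PosDef) ∧
    (∀ i j, ContDiffOn ℝ 1 (fun t => interpA T B Si Sf t i j) (Icc (0:ℝ) T)) ∧
    (∀ i j, ContDiffOn ℝ 1 (fun t => interpS T Si Sf t i j) (Icc (0:ℝ) T)) ∧
    (∀ t ∈ Icc (0:ℝ) T, ∀ i j,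
      HasDerivWithinAt (fun s => interpS T Si Sf s i j) (interpSd T Si Sf i j)
        (Icc (0:ℝ) T) t) ∧
    (∀ t ∈ Icc (0:ℝ) T, ∀ i j,
      HasDerivWithinAt (fun s => interpA T B Si Sf s i j) (interpAd T B Si Sf t i j)
        (Icc (0:ℝ) T) t) ∧
    (∀ t ∈ Icc (0:ℝ) T,
      interpSd T Si Sf =
        interpA T B Si Sf t * interpS T Si Sf t +
        interpS T Si Sf t * (interpA T B Si Sf t)ᵀ + B * Bᵀ) ∧
    interpS T Si Sf 0 = Si ∧ interpS T Si Sf T = Sf ∧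
    IntegrableOn (fun t => Matrix.trace (interpA T B Si Sf t * (interpA T B Si Sf t)ᵀ))
      (Icc (0:ℝ) T) ∧
    IntegrableOn
      (fun t => Matrix.trace (interpAd T B Si Sf t * interpS T Si Sf t *
        (interpAd T B Si Sf t)ᵀ)) (Icc (0:ℝ) T) := by
  have hpos : ∀ t ∈ Icc (0:ℝ) T, (interpS T Si Sf t).PosDef := fun _ ht =>
    interpS_posDef hT hSi hSf ht
  have hunit : ∀ t ∈ Icc (0:ℝ) T, IsUnit (interpS T Si Sf t) := fun t ht => (hpos t ht).isUnit
  have hSi_symm : Si.IsSymm := isHermitian_iff_isSymm.mp hSi.isHermitian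
  have hSf_symm : Sf.IsSymm := isHermitian_iff_isSymm.mp hSf.isHermitian
  exact ⟨hpos,
    fun i j t ht => ((contDiffAt_interpA B (hunit t ht)).matrix_entry i j).contDiffWithinAt,
    fun i j => (contDiff_interpS_apply i j).contDiffOn,
    fun t _ i j => (hasDerivAt_interpS.matrix_entry i j).hasDerivWithinAt,
    fun t ht i j => ((hasDerivAt_interpA B (hunit t ht)).matrix_entry i j).hasDerivWithinAt,
    fun t ht => interpSd_eq_lyapunov B hSi_symm hSf_symm (hunit t ht),
    interpS_zero, interpS_self hT.ne',
    integrableOn_trace_interpA_mul_transpose B hT hSi hSf,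
    integrableOn_trace_interpAd_mul_interpS_mul_transpose B hT hSi hSf⟩
end

section
/- Fix T>0. Suppose A, Σ, Λ : [0,T] → ℝ^{n×n} are differentiable, Σ_t and Λ_t are symmetric for all t, and for all t ∈ [0,T]: Σ̇_t = A_tΣ_t + Σ_tA_tᵀ, −Λ̇_t = Λ_tA_t + A_tᵀΛ_t, and A_t = Λ_tΣ_t. Then Ȧ_t = A_tA_tᵀ − A_tᵀA_t for all t ∈ [0,T]; consequently the skew-symmetric part Ω_t := ½(A_t − A_tᵀ) is constant in t, and tr(A_t) = tr(A_0) for all t ∈ [0,T]. -/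
/-!
Since `A = ΛS`, the product rule and the two Lyapunov equations give
`Ȧ = Λ̇S + ΛṠ = -(ΛA + AᵀΛ)S + Λ(AS + SAᵀ) = AAᵀ - AᵀA`, the `ΛAS` terms cancelling.
This commutator is symmetric and traceless, so the skew part and the trace of `A` have zero
derivative and are constant on `[0, T]` by the mean value theorem.
-/

open Matrix Set

theorem mul_add_mul_eq_mul_sub_mul {R : Type*} [Ring R] {L L' S S' A B : R}
    (hA : A = L * S) (hL : -L' = L * A + B * L) (hS : S' = A * S + S * B) :
    L' * S + L * S' = A * B - B * A := by
  rw [← neg_neg L', hL, hS, hA]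
  noncomm_ring

theorem Matrix.isSymm_mul_transpose_sub_transpose_mul {n α : Type*} [Fintype n] [CommRing α]
    (A : Matrix n n α) : (A * Aᵀ - Aᵀ * A).IsSymm :=
  (isSymm_mul_transpose_self A).sub (isSymm_transpose_mul_self A)

theorem Matrix.trace_mul_sub_mul_eq_zero {n α : Type*} [Fintype n] [CommRing α]
    (A B : Matrix n n α) : (A * B - B * A).trace = 0 := by
  rw [trace_sub, trace_mul_comm, sub_self]

theorem constant_of_hasDerivWithinAt_zero {E : Type*} [NormedAddCommGroup E] [NormedSpace ℝ E]
    {f : ℝ → E} {a b : ℝ} (h : ∀ x ∈ Icc a b, HasDerivWithinAt f 0 (Icc a b) x) :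
    ∀ x ∈ Icc a b, f x = f a :=
  constant_of_derivWithin_zero (fun x hx => (h x hx).differentiableWithinAt) fun x hx =>
    (h x (Ico_subset_Icc_self hx)).derivWithin
      (uniqueDiffOn_Icc (hx.1.trans_lt hx.2) x (Ico_subset_Icc_self hx))

section EntrywiseDeriv

variable {𝕜 : Type*} [NontriviallyNormedField 𝕜] {l m n : Type*} {s : Set 𝕜} {x : 𝕜}

theorem Matrix.hasDerivWithinAt_mul_apply [Fintype m] {A : 𝕜 → Matrix l m 𝕜}
    {B : 𝕜 → Matrix m n 𝕜} {A' : Matrix l m 𝕜} {B' : Matrix m n 𝕜}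
    (hA : ∀ i j, HasDerivWithinAt (fun y => A y i j) (A' i j) s x)
    (hB : ∀ i j, HasDerivWithinAt (fun y => B y i j) (B' i j) s x) (i : l) (j : n) :
    HasDerivWithinAt (fun y => (A y * B y) i j) ((A' * B x + A x * B') i j) s x := by
  simp only [mul_apply, add_apply, ← Finset.sum_add_distrib]
  exact HasDerivWithinAt.fun_sum fun k _ => (hA i k).mul (hB k j)

theorem Matrix.hasDerivWithinAt_trace [Fintype n] {A : 𝕜 → Matrix n n 𝕜} {A' : Matrix n n 𝕜}
    (hA : ∀ i j, HasDerivWithinAt (fun y => A y i j) (A' i j) s x) :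
    HasDerivWithinAt (fun y => (A y).trace) A'.trace s x :=
  HasDerivWithinAt.fun_sum fun i _ => hA i i

theorem UniqueDiffWithinAt.eq_matrix_deriv (H : UniqueDiffWithinAt 𝕜 s x)
    {A : 𝕜 → Matrix m n 𝕜} {A' A'' : Matrix m n 𝕜}
    (hA' : ∀ i j, HasDerivWithinAt (fun y => A y i j) (A' i j) s x)
    (hA'' : ∀ i j, HasDerivWithinAt (fun y => A y i j) (A'' i j) s x) : A' = A'' :=
  Matrix.ext fun i j => H.eq_deriv s (hA' i j) (hA'' i j)

end EntrywiseDeriv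

section ConstantOnIcc

variable {n : Type*} {A A' : ℝ → Matrix n n ℝ} {a b : ℝ}

theorem Matrix.sub_transpose_eq_of_hasDerivWithinAt_isSymm
    (hA : ∀ x ∈ Icc a b, ∀ i j, HasDerivWithinAt (fun y => A y i j) (A' x i j) (Icc a b) x)
    (hsymm : ∀ x ∈ Icc a b, (A' x).IsSymm) :
    ∀ x ∈ Icc a b, A x - (A x)ᵀ = A a - (A a)ᵀ := by
  intro x hx
  ext i j
  refine constant_of_hasDerivWithinAt_zero (f := fun y => A y i j - A y j i)
    (fun y hy => ?_) x hx
  simpa only [(hsymm y hy).apply i j, sub_self] using (hA y hy i j).fun_sub (hA y hy j i)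

theorem Matrix.trace_eq_of_hasDerivWithinAt_trace_eq_zero [Fintype n]
    (hA : ∀ x ∈ Icc a b, ∀ i j, HasDerivWithinAt (fun y => A y i j) (A' x i j) (Icc a b) x)
    (htrace : ∀ x ∈ Icc a b, (A' x).trace = 0) :
    ∀ x ∈ Icc a b, (A x).trace = (A a).trace :=
  constant_of_hasDerivWithinAt_zero fun x hx => htrace x hx ▸ hasDerivWithinAt_trace (hA x hx)

end ConstantOnIcc

theorem zero_noise_control_derivative_general
    {n : ℕ} (T : ℝ) (hT : 0 < T)
    (A A' S S' Lam Lam' : ℝ → Matrix (Fin n) (Fin n) ℝ)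
    (hAderiv : ∀ t ∈ Icc (0:ℝ) T, ∀ i j,
      HasDerivWithinAt (fun s => A s i j) (A' t i j) (Icc (0:ℝ) T) t)
    (hSderiv : ∀ t ∈ Icc (0:ℝ) T, ∀ i j,
      HasDerivWithinAt (fun s => S s i j) (S' t i j) (Icc (0:ℝ) T) t)
    (hLamDeriv : ∀ t ∈ Icc (0:ℝ) T, ∀ i j,
      HasDerivWithinAt (fun s => Lam s i j) (Lam' t i j) (Icc (0:ℝ) T) t)
    (hdyn : ∀ t ∈ Icc (0:ℝ) T, S' t = A t * S t + S t * (A t)ᵀ)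
    (hadj : ∀ t ∈ Icc (0:ℝ) T, -(Lam' t) = Lam t * A t + (A t)ᵀ * Lam t)
    (hstat : ∀ t ∈ Icc (0:ℝ) T, A t = Lam t * S t) :
    (∀ t ∈ Icc (0:ℝ) T, A' t = A t * (A t)ᵀ - (A t)ᵀ * A t) ∧
    (∀ t ∈ Icc (0:ℝ) T,
      (1/2 : ℝ) • (A t - (A t)ᵀ) = (1/2 : ℝ) • (A 0 - (A 0)ᵀ)) ∧
    (∀ t ∈ Icc (0:ℝ) T, Matrix.trace (A t) = Matrix.trace (A 0)) := by
  have hA' : ∀ t ∈ Icc (0:ℝ) T, A' t = A t * (A t)ᵀ - (A t)ᵀ * A t := by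
    intro t ht
    have hprod : ∀ i j, HasDerivWithinAt (fun s => A s i j)
        ((Lam' t * S t + Lam t * S' t) i j) (Icc 0 T) t := fun i j =>
      (hasDerivWithinAt_mul_apply (hLamDeriv t ht) (hSderiv t ht) i j).congr_of_mem
        (fun s hs => by rw [hstat s hs]) ht
    rw [(uniqueDiffOn_Icc hT t ht).eq_matrix_deriv (hAderiv t ht) hprod]
    exact mul_add_mul_eq_mul_sub_mul (hstat t ht) (hadj t ht) (hdyn t ht)
  refine ⟨hA', fun t ht => ?_, trace_eq_of_hasDerivWithinAt_trace_eq_zero hAderiv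
    fun t ht => hA' t ht ▸ trace_mul_sub_mul_eq_zero _ _⟩
  rw [sub_transpose_eq_of_hasDerivWithinAt_isSymm hAderiv
    (fun t ht => hA' t ht ▸ isSymm_mul_transpose_sub_transpose_mul _) t ht]

/-- in the zero-noise spatial optimality system, the control satisfies
`Ȧ = AAᵀ − AᵀA`; consequently its skew-symmetric part `Ω = ½(A − Aᵀ)` is constant in
time and `tr(A_t) = tr(A_0)`. -/
theorem zero_noise_control_derivative
    {n : ℕ} (T : ℝ) (hT : 0 < T)
    (A A' S S' Lam Lam' : ℝ → Matrix (Fin n) (Fin n) ℝ)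
    (hSsymm : ∀ t ∈ Icc (0:ℝ) T, (S t).IsSymm)
    (hLamSymm : ∀ t ∈ Icc (0:ℝ) T, (Lam t).IsSymm)
    (hAderiv : ∀ t ∈ Icc (0:ℝ) T, ∀ i j,
      HasDerivWithinAt (fun s => A s i j) (A' t i j) (Icc (0:ℝ) T) t)
    (hSderiv : ∀ t ∈ Icc (0:ℝ) T, ∀ i j,
      HasDerivWithinAt (fun s => S s i j) (S' t i j) (Icc (0:ℝ) T) t)
    (hLamDeriv : ∀ t ∈ Icc (0:ℝ) T, ∀ i j,
      HasDerivWithinAt (fun s => Lam s i j) (Lam' t i j) (Icc (0:ℝ) T) t)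
    (hdyn : ∀ t ∈ Icc (0:ℝ) T, S' t = A t * S t + S t * (A t)ᵀ)
    (hadj : ∀ t ∈ Icc (0:ℝ) T, -(Lam' t) = Lam t * A t + (A t)ᵀ * Lam t)
    (hstat : ∀ t ∈ Icc (0:ℝ) T, A t = Lam t * S t) :
    (∀ t ∈ Icc (0:ℝ) T, A' t = A t * (A t)ᵀ - (A t)ᵀ * A t) ∧
    (∀ t ∈ Icc (0:ℝ) T,
      (1/2 : ℝ) • (A t - (A t)ᵀ) = (1/2 : ℝ) • (A 0 - (A 0)ᵀ)) ∧
    (∀ t ∈ Icc (0:ℝ) T, Matrix.trace (A t) = Matrix.trace (A 0)) :=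
  zero_noise_control_derivative_general T hT A A' S S' Lam Lam' hAderiv hSderiv hLamDeriv hdyn hadj
    hstat
end

section
/- Fix T>0. Suppose A, Σ, Λ : [0,T] → ℝ^{n×n} are differentiable, Σ_t and Λ_t are symmetric for all t, and for all t ∈ [0,T]: Σ̇_t = A_tΣ_t + Σ_tA_tᵀ, −Λ̇_t = Λ_tA_t + A_tᵀΛ_t, and A_t = Λ_tΣ_t. Let Ω := ½(A_0 − A_0ᵀ) and S_0 := ½(A_0 + A_0ᵀ). Then the symmetric part S_t := ½(A_t + A_tᵀ) satisfies Ṡ_t = 2(ΩS_t − S_tΩ), and A_t = exp(2tΩ) S_0 exp(−2tΩ) + Ω for all t ∈ [0,T], where exp denotes the matrix exponential. -/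
/-!
Differentiating `A = ΛΣ` and substituting the two Lyapunov equations gives `Ȧ = AAᵀ - AᵀA`,
a symmetric matrix. Hence the skew part of `A` stays equal to `Ω`, and with `A = S + Ω` the
symmetric part obeys `Ṡ = 2(ΩS - SΩ)`. A solution of `Ṡ = CS - SC` is `exp(tC) S₀ exp(-tC)`,
because `exp(-tC) S_t exp(tC)` has zero derivative.
-/

open Matrix Set NormedSpace

section EntrywiseDeriv

variable {𝕜 : Type*} [NontriviallyNormedField 𝕜] {l m n : Type*}

def HasEntrywiseDerivWithinAt (M : 𝕜 → Matrix m n 𝕜) (M' : Matrix m n 𝕜) (s : Set 𝕜)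
    (x : 𝕜) : Prop :=
  ∀ i j, HasDerivWithinAt (fun y => M y i j) (M' i j) s x

namespace HasEntrywiseDerivWithinAt

variable {M N : 𝕜 → Matrix m n 𝕜} {M' N' : Matrix m n 𝕜} {s : Set 𝕜} {x : 𝕜}

theorem add (hM : HasEntrywiseDerivWithinAt M M' s x) (hN : HasEntrywiseDerivWithinAt N N' s x) :
    HasEntrywiseDerivWithinAt (fun y => M y + N y) (M' + N') s x :=
  fun i j => (hM i j).add (hN i j)

theorem sub (hM : HasEntrywiseDerivWithinAt M M' s x) (hN : HasEntrywiseDerivWithinAt N N' s x) :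
    HasEntrywiseDerivWithinAt (fun y => M y - N y) (M' - N') s x :=
  fun i j => (hM i j).sub (hN i j)

theorem const_smul (c : 𝕜) (hM : HasEntrywiseDerivWithinAt M M' s x) :
    HasEntrywiseDerivWithinAt (fun y => c • M y) (c • M') s x :=
  fun i j => (hM i j).const_mul c

theorem transpose (hM : HasEntrywiseDerivWithinAt M M' s x) :
    HasEntrywiseDerivWithinAt (fun y => (M y)ᵀ) M'ᵀ s x :=
  fun i j => hM j i

theorem congr (hM : HasEntrywiseDerivWithinAt M M' s x) (hs : EqOn N M s) (hx : N x = M x) :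
    HasEntrywiseDerivWithinAt N M' s x :=
  fun i j => (hM i j).congr (fun y hy => by rw [hs hy]) (by rw [hx])

theorem mul [Fintype m] {M : 𝕜 → Matrix l m 𝕜} {M' : Matrix l m 𝕜} {N : 𝕜 → Matrix m n 𝕜}
    {N' : Matrix m n 𝕜} (hM : HasEntrywiseDerivWithinAt M M' s x)
    (hN : HasEntrywiseDerivWithinAt N N' s x) :
    HasEntrywiseDerivWithinAt (fun y => M y * N y) (M' * N x + M x * N') s x := by
  intro i j
  simp only [mul_apply, Matrix.add_apply]
  rw [← Finset.sum_add_distrib]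
  exact HasDerivWithinAt.fun_sum fun k _ => (hM i k).mul (hN k j)

end HasEntrywiseDerivWithinAt

theorem hasEntrywiseDerivWithinAt_exp_smul {𝕂 : Type*} [RCLike 𝕂] [Fintype n] [DecidableEq n]
    (C : Matrix n n 𝕂) (s : Set 𝕂) (x : 𝕂) :
    HasEntrywiseDerivWithinAt (fun u => exp (u • C)) (exp (x • C) * C) s x := by
  open scoped Matrix.Norms.Operator in
  exact fun i j => ((entryLinearMap 𝕂 𝕂 i j).toContinuousLinearMap.hasFDerivAt.comp_hasDerivAt x
    (hasDerivAt_exp_smul_const C x)).hasDerivWithinAt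

theorem constant_of_hasEntrywiseDerivWithinAt_zero {M : ℝ → Matrix m n ℝ} {a b : ℝ}
    (hM : ∀ x ∈ Icc a b, HasEntrywiseDerivWithinAt M 0 (Icc a b) x) :
    ∀ x ∈ Icc a b, M x = M a := by
  intro x hx
  ext i j
  refine constant_of_has_deriv_right_zero (f := fun y => M y i j)
    (fun y hy => (hM y hy i j).continuousWithinAt) (fun y hy => ?_) x hx
  exact (hM y (Ico_subset_Icc_self hy) i j).mono_of_mem_nhdsWithin (Icc_mem_nhdsGE_of_mem hy)

theorem eq_exp_smul_mul_mul_exp_neg_smul_of_hasEntrywiseDerivWithinAt [Fintype n]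
    [DecidableEq n] {S : ℝ → Matrix n n ℝ} {C : Matrix n n ℝ} {T : ℝ}
    (hS : ∀ t ∈ Icc 0 T, HasEntrywiseDerivWithinAt S (C * S t - S t * C) (Icc 0 T) t) :
    ∀ t ∈ Icc 0 T, S t = exp (t • C) * S 0 * exp ((-t) • C) := by
  intro t ht
  have hconj : ∀ u ∈ Icc 0 T, HasEntrywiseDerivWithinAt
      (fun u => exp (u • -C) * S u * exp (u • C)) 0 (Icc 0 T) u := by
    intro u hu
    convert ((hasEntrywiseDerivWithinAt_exp_smul (-C) _ u).mul (hS u hu)).mul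
      (hasEntrywiseDerivWithinAt_exp_smul C _ u) using 1
    rw [(((Commute.refl C).smul_left u).exp_left).eq]
    simp only [add_mul, mul_sub, sub_mul, mul_neg, neg_mul, mul_assoc]
    abel
  have hSt := constant_of_hasEntrywiseDerivWithinAt_zero hconj t ht
  simp only [zero_smul, exp_zero, one_mul, mul_one] at hSt
  have hinv : exp (t • C) * exp (t • -C) = 1 := by
    rw [← Matrix.exp_add_of_commute _ _ (((Commute.refl C).neg_right.smul_left t).smul_right t),
      smul_neg, add_neg_cancel, exp_zero]
  calc S t = exp (t • C) * exp (t • -C) * S t * (exp (t • C) * exp (t • -C)) := by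
        rw [hinv, one_mul, mul_one]
    _ = exp (t • C) * (exp (t • -C) * S t * exp (t • C)) * exp (t • -C) := by
        simp only [mul_assoc]
    _ = exp (t • C) * S 0 * exp ((-t) • C) := by rw [hSt, neg_smul, smul_neg]

theorem sub_transpose_eq_of_isSymm_deriv {A A' : ℝ → Matrix n n ℝ} {a b : ℝ}
    (hA : ∀ t ∈ Icc a b, HasEntrywiseDerivWithinAt A (A' t) (Icc a b) t)
    (hA' : ∀ t ∈ Icc a b, (A' t).IsSymm) :
    ∀ t ∈ Icc a b, A t - (A t)ᵀ = A a - (A a)ᵀ :=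
  constant_of_hasEntrywiseDerivWithinAt_zero fun t ht => by
    simpa only [(hA' t ht).eq, sub_self] using (hA t ht).sub (hA t ht).transpose

end EntrywiseDeriv

theorem mul_add_mul_eq_commutator_of_adjoint {R : Type*} [Ring R] {L L' S S' A B : R}
    (hL' : -L' = L * A + B * L) (hS' : S' = A * S + S * B) (hA : A = L * S) :
    L' * S + L * S' = A * B - B * A := by
  rw [show L' = -(L * A + B * L) by rw [← hL', neg_neg], hS', hA]
  noncomm_ring

theorem mul_transpose_sub_transpose_mul_eq_two_smul_commutator {n 𝕜 : Type*} [Fintype n]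
    [Field 𝕜] [CharZero 𝕜] (A : Matrix n n 𝕜) :
    A * Aᵀ - Aᵀ * A = (2 : 𝕜) • ((1/2 : 𝕜) • (A - Aᵀ) * ((1/2 : 𝕜) • (A + Aᵀ)) -
      (1/2 : 𝕜) • (A + Aᵀ) * ((1/2 : 𝕜) • (A - Aᵀ))) := by
  simp only [smul_mul_assoc, mul_smul_comm, mul_add, add_mul, mul_sub, sub_mul]
  module

theorem zero_noise_control_closed_form_general
    {n : ℕ} (T : ℝ)
    (A S S' Lam Lam' : ℝ → Matrix (Fin n) (Fin n) ℝ)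
    (hSderiv : ∀ t ∈ Icc (0:ℝ) T, ∀ i j,
      HasDerivWithinAt (fun s => S s i j) (S' t i j) (Icc (0:ℝ) T) t)
    (hLamDeriv : ∀ t ∈ Icc (0:ℝ) T, ∀ i j,
      HasDerivWithinAt (fun s => Lam s i j) (Lam' t i j) (Icc (0:ℝ) T) t)
    (hdyn : ∀ t ∈ Icc (0:ℝ) T, S' t = A t * S t + S t * (A t)ᵀ)
    (hadj : ∀ t ∈ Icc (0:ℝ) T, -(Lam' t) = Lam t * A t + (A t)ᵀ * Lam t)
    (hstat : ∀ t ∈ Icc (0:ℝ) T, A t = Lam t * S t) :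
    (∀ t ∈ Icc (0:ℝ) T, ∀ i j,
      HasDerivWithinAt (fun s => ((1/2 : ℝ) • (A s + (A s)ᵀ)) i j)
        (((2 : ℝ) •
          (((1/2 : ℝ) • (A 0 - (A 0)ᵀ)) * ((1/2 : ℝ) • (A t + (A t)ᵀ)) -
           ((1/2 : ℝ) • (A t + (A t)ᵀ)) * ((1/2 : ℝ) • (A 0 - (A 0)ᵀ)))) i j)
        (Icc (0:ℝ) T) t) ∧
    (∀ t ∈ Icc (0:ℝ) T,
      A t =
        exp ((2 * t) • ((1/2 : ℝ) • (A 0 - (A 0)ᵀ))) *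
          ((1/2 : ℝ) • (A 0 + (A 0)ᵀ)) *
          exp ((-(2 * t)) • ((1/2 : ℝ) • (A 0 - (A 0)ᵀ))) +
        (1/2 : ℝ) • (A 0 - (A 0)ᵀ)) := by
  set Ω := (1/2 : ℝ) • (A 0 - (A 0)ᵀ)
  have hcommSymm (B : Matrix (Fin n) (Fin n) ℝ) : (B * Bᵀ - Bᵀ * B).IsSymm :=
    (isSymm_mul_transpose_self B).sub (isSymm_transpose_mul_self B)
  have hA : ∀ t ∈ Icc 0 T,
      HasEntrywiseDerivWithinAt A (A t * (A t)ᵀ - (A t)ᵀ * A t) (Icc 0 T) t := fun t ht =>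
    mul_add_mul_eq_commutator_of_adjoint (hadj t ht) (hdyn t ht) (hstat t ht) ▸
      (HasEntrywiseDerivWithinAt.mul (hLamDeriv t ht) (hSderiv t ht)).congr
        (fun u hu => hstat u hu) (hstat t ht)
  have hskew : ∀ t ∈ Icc 0 T, (1/2 : ℝ) • (A t - (A t)ᵀ) = Ω := fun t ht => by
    rw [sub_transpose_eq_of_isSymm_deriv hA (fun t _ => hcommSymm (A t)) t ht]
  have hsym : ∀ t ∈ Icc 0 T, HasEntrywiseDerivWithinAt (fun s => (1/2 : ℝ) • (A s + (A s)ᵀ))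
      ((2 : ℝ) • (Ω * ((1/2 : ℝ) • (A t + (A t)ᵀ)) - ((1/2 : ℝ) • (A t + (A t)ᵀ)) * Ω))
      (Icc 0 T) t := by
    intro t ht
    rw [← hskew t ht, ← mul_transpose_sub_transpose_mul_eq_two_smul_commutator]
    convert ((hA t ht).add (hA t ht).transpose).const_smul (1/2 : ℝ) using 1
    rw [(hcommSymm (A t)).eq]
    module
  refine ⟨hsym, fun t ht => ?_⟩
  have hS := eq_exp_smul_mul_mul_exp_neg_smul_of_hasEntrywiseDerivWithinAt (C := (2 : ℝ) • Ω)
    (fun t ht => by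
      convert hsym t ht using 1
      simp only [smul_mul_assoc, mul_smul_comm]
      module) t ht
  simp only [smul_smul] at hS
  calc A t = (1/2 : ℝ) • (A t + (A t)ᵀ) + (1/2 : ℝ) • (A t - (A t)ᵀ) := by module
    _ = _ := by rw [hS, hskew t ht, mul_comm t, neg_mul, mul_comm]

/-- in the zero-noise spatial optimality system, the symmetric part
`S_t = ½(A_t + A_tᵀ)` satisfies `Ṡ = 2(ΩS − SΩ)` and hence
`A_t = exp(2tΩ) S_0 exp(−2tΩ) + Ω`, where `Ω = ½(A_0 − A_0ᵀ)`. -/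
theorem zero_noise_control_closed_form
    {n : ℕ} (T : ℝ) (hT : 0 < T)
    (A A' S S' Lam Lam' : ℝ → Matrix (Fin n) (Fin n) ℝ)
    (hSsymm : ∀ t ∈ Icc (0:ℝ) T, (S t).IsSymm)
    (hLamSymm : ∀ t ∈ Icc (0:ℝ) T, (Lam t).IsSymm)
    (hAderiv : ∀ t ∈ Icc (0:ℝ) T, ∀ i j,
      HasDerivWithinAt (fun s => A s i j) (A' t i j) (Icc (0:ℝ) T) t)
    (hSderiv : ∀ t ∈ Icc (0:ℝ) T, ∀ i j,
      HasDerivWithinAt (fun s => S s i j) (S' t i j) (Icc (0:ℝ) T) t)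
    (hLamDeriv : ∀ t ∈ Icc (0:ℝ) T, ∀ i j,
      HasDerivWithinAt (fun s => Lam s i j) (Lam' t i j) (Icc (0:ℝ) T) t)
    (hdyn : ∀ t ∈ Icc (0:ℝ) T, S' t = A t * S t + S t * (A t)ᵀ)
    (hadj : ∀ t ∈ Icc (0:ℝ) T, -(Lam' t) = Lam t * A t + (A t)ᵀ * Lam t)
    (hstat : ∀ t ∈ Icc (0:ℝ) T, A t = Lam t * S t) :
    (∀ t ∈ Icc (0:ℝ) T, ∀ i j,
      HasDerivWithinAt (fun s => ((1/2 : ℝ) • (A s + (A s)ᵀ)) i j)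
        (((2 : ℝ) •
          (((1/2 : ℝ) • (A 0 - (A 0)ᵀ)) * ((1/2 : ℝ) • (A t + (A t)ᵀ)) -
           ((1/2 : ℝ) • (A t + (A t)ᵀ)) * ((1/2 : ℝ) • (A 0 - (A 0)ᵀ)))) i j)
        (Icc (0:ℝ) T) t) ∧
    (∀ t ∈ Icc (0:ℝ) T,
      A t =
        exp ((2 * t) • ((1/2 : ℝ) • (A 0 - (A 0)ᵀ))) *
          ((1/2 : ℝ) • (A 0 + (A 0)ᵀ)) *
          exp ((-(2 * t)) • ((1/2 : ℝ) • (A 0 - (A 0)ᵀ))) +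
        (1/2 : ℝ) • (A 0 - (A 0)ᵀ)) :=
  zero_noise_control_closed_form_general T A S S' Lam Lam' hSderiv hLamDeriv hdyn hadj hstat
end

section
/- Let T>0 and Σ_0, Σ_T ∈ S₊ⁿ. Set M := Σ_0^{−1/2} Σ_T Σ_0^{−1/2} (which is symmetric positive definite), let C be the unique symmetric matrix with exp(C) = M, and define the Fisher–Rao geodesic Σ^F_t := Σ_0^{1/2} exp((t/T)C) Σ_0^{1/2} for t ∈ [0,T] and A^F := (1/(2T)) Σ_0^{1/2} C Σ_0^{−1/2}. Then a matrix A ∈ ℝ^{n×n} satisfies (d/dt)Σ^F_t = AΣ^F_t + Σ^F_t Aᵀ for all t ∈ [0,T] if and only if A = A^F + Σ_0^{1/2} X Σ_0^{−1/2} for some skew-symmetric X with XM = MX. In particular, if M has n distinct eigenvalues then A = A^F is the unique such matrix, and A^F is the unique such matrix satisfying AΣ_0 = Σ_0Aᵀ. -/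
/-!
Write `E t = exp ((t / T) • C)` and `B = Σ₀^{-1/2} A Σ₀^{1/2}`. Congruence by `Σ₀^{1/2}` turns
the equation `Σ' = A Σ + Σ Aᵀ` along the geodesic into `B E t + E t Bᵀ = T⁻¹ C E t`. At `t = 0`
this says that `X = B - C / (2T)` is skew; at `t = T`, given that, it says that `B` commutes with
`M = exp C`. Conversely, a matrix commuting with `exp C` commutes with `C = log (exp C)`, hence
with every `E t`, and then the equation holds for all `t`.

A matrix commuting with a symmetric `M` of simple spectrum is diagonal in an eigenbasis of `M`,
so it is symmetric, and a skew one vanishes. Finally `A Σ₀ = Σ₀ Aᵀ` says exactly that `B` is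
symmetric, which again kills the skew part `X`.
-/

open Matrix Set NormedSpace

/-- `A` induces the path `SF` of covariances: `(d/dt)SF_t = A SF_t + SF_t Aᵀ` on `[0,T]`. -/
def InducesPath {n : ℕ} (T : ℝ) (SF : ℝ → Matrix (Fin n) (Fin n) ℝ)
    (A : Matrix (Fin n) (Fin n) ℝ) : Prop :=
  ∀ t ∈ Icc (0:ℝ) T, ∀ i j,
    HasDerivWithinAt (fun s => SF s i j) ((A * SF t + SF t * Aᵀ) i j) (Icc (0:ℝ) T) t

theorem inducesPath_iff_of_hasDerivAt {n : ℕ} {T : ℝ} (hT : 0 < T)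
    {SF SF' : ℝ → Matrix (Fin n) (Fin n) ℝ}
    (hSF : ∀ t i j, HasDerivAt (fun s => SF s i j) (SF' t i j) t) (A : Matrix (Fin n) (Fin n) ℝ) :
    InducesPath T SF A ↔ ∀ t ∈ Icc 0 T, A * SF t + SF t * Aᵀ = SF' t := by
  refine forall₂_congr fun t ht => ?_
  have hu : UniqueDiffWithinAt ℝ (Icc 0 T) t := uniqueDiffOn_Icc hT t ht
  constructor
  · intro h
    ext i j
    exact hu.eq_deriv _ (h i j) (hSF t i j).hasDerivWithinAt
  · rintro h i j
    rw [h]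
    exact (hSF t i j).hasDerivWithinAt

namespace Matrix

variable {n : Type*}

theorem eq_zero_of_isSymm_of_transpose_eq_neg {α : Type*} [AddGroup α] [IsAddTorsionFree α]
    {X : Matrix n n α} (hX : X.IsSymm) (hX' : Xᵀ = -X) : X = 0 := by
  ext i j
  exact self_eq_neg.mp (congr_fun₂ (hX.symm.trans hX') i j)

variable [Fintype n]

section CommRing

variable {R : Type*} [CommRing R]

theorem commute_of_add_transpose_eq {B K M : Matrix n n R} (h0 : B + Bᵀ = K)
    (h1 : B * M + M * Bᵀ = K * M) (hKM : Commute K M) : Commute B M := by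
  rw [eq_sub_of_add_eq' h0, mul_sub, ← hKM.eq] at h1
  calc B * M = (B * M + (K * M - M * B)) - K * M + M * B := by abel
    _ = M * B := by rw [h1]; abel

theorem smul_add_mul_add_mul_transpose {C X E : Matrix n n R} (a : R) (hC : Cᵀ = C)
    (hX : Xᵀ = -X) (hCE : Commute C E) (hXE : Commute X E) :
    (a • C + X) * E + E * (a • C + X)ᵀ = (2 * a) • (C * E) := by
  rw [transpose_add, transpose_smul, hC, hX]
  simp only [add_mul, mul_add, mul_neg, smul_mul_assoc, mul_smul_comm, hCE.eq, hXE.eq]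
  module

variable [DecidableEq n] {S : Matrix n n R}

theorem transpose_inv_mul_mul (hS : Sᵀ = S) (A : Matrix n n R) :
    (S⁻¹ * A * S)ᵀ = S * Aᵀ * S⁻¹ := by
  simp [transpose_mul, transpose_nonsing_inv, hS, mul_assoc]

theorem inv_mul_mul_eq_iff (hSu : IsUnit S) {A Y : Matrix n n R} :
    S⁻¹ * A * S = Y ↔ A = S * Y * S⁻¹ := by
  have hd := (isUnit_iff_isUnit_det S).mp hSu
  constructor <;> rintro rfl <;> simp [mul_assoc, hd]

theorem mul_congr_add_congr_mul_transpose (hS : Sᵀ = S) (hSu : IsUnit S) (A P : Matrix n n R) :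
    A * (S * P * S) + (S * P * S) * Aᵀ
      = S * ((S⁻¹ * A * S) * P + P * (S⁻¹ * A * S)ᵀ) * S := by
  have hd := (isUnit_iff_isUnit_det S).mp hSu
  rw [transpose_inv_mul_mul hS]
  simp [mul_add, add_mul, mul_assoc, hd]

theorem mul_mul_self_eq_iff_isSymm (hS : Sᵀ = S) (hSu : IsUnit S) (A : Matrix n n R) :
    A * (S * S) = (S * S) * Aᵀ ↔ (S⁻¹ * A * S).IsSymm := by
  have hd := (isUnit_iff_isUnit_det S).mp hSu
  have hl : A * (S * S) = S * (S⁻¹ * A * S) * S := by simp [mul_assoc, hd]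
  have hr : (S * S) * Aᵀ = S * (S⁻¹ * A * S)ᵀ * S := by
    rw [transpose_inv_mul_mul hS]
    simp [mul_assoc, hd]
  rw [hl, hr, hSu.mul_left_inj, hSu.mul_right_inj, IsSymm, eq_comm]

end CommRing

variable [DecidableEq n]

theorem apply_eq_zero_of_commute_diagonal {R : Type*} [CommRing R] [NoZeroDivisors R]
    {Y : Matrix n n R} {d : n → R} (h : Commute Y (diagonal d)) {i j : n} (hij : d i ≠ d j) :
    Y i j = 0 := by
  have hij' : Y i j * d j = d i * Y i j := by simpa using congr_fun₂ h i j
  have : Y i j * (d j - d i) = 0 := by rw [mul_sub, hij', mul_comm, sub_self]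
  exact (mul_eq_zero.mp this).resolve_right (sub_ne_zero.mpr hij.symm)

theorem IsHermitian.isHermitian_of_commute {M X : Matrix n n ℝ} (hM : M.IsHermitian)
    (hinj : Function.Injective hM.eigenvalues) (h : Commute X M) : X.IsHermitian := by
  set φ := Unitary.conjStarAlgAut ℝ (Matrix n n ℝ) hM.eigenvectorUnitary
  have hMdiag : φ.symm M = diagonal hM.eigenvalues := by
    rw [StarAlgEquiv.symm_apply_eq]
    conv_lhs => rw [hM.spectral_theorem]
    rfl
  have hY : Commute (φ.symm X) (diagonal hM.eigenvalues) := hMdiag ▸ h.map φ.symm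
  have hdiag : φ.symm X = diagonal (φ.symm X).diag := by
    ext i j
    rcases eq_or_ne i j with rfl | hij
    · simp
    · rw [diagonal_apply_ne _ hij, apply_eq_zero_of_commute_diagonal hY (hinj.ne hij)]
  rw [IsHermitian, ← star_eq_conjTranspose, ← φ.apply_symm_apply X, ← map_star, hdiag]
  simp [star_eq_conjTranspose]

open scoped Matrix.Norms.L2Operator in
theorem IsHermitian.commute_of_commute_exp {C X : Matrix n n ℝ} (hC : C.IsHermitian)
    (h : Commute X (NormedSpace.exp C)) : Commute X C := by
  have hlog := (h.symm.cfc_real Real.log).symm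
  have hlog_exp := CFC.log_exp C hC
  rw [CFC.log] at hlog_exp
  rwa [hlog_exp] at hlog

theorem mul_exp_add_exp_mul_transpose_iff {B C : Matrix n n ℝ} (hC : C.IsSymm) {T : ℝ}
    (hT : 0 < T) :
    (∀ t ∈ Icc 0 T,
        B * exp ((t / T) • C) + exp ((t / T) • C) * Bᵀ = T⁻¹ • (C * exp ((t / T) • C))) ↔
      ∃ X, Xᵀ = -X ∧ Commute X (exp C) ∧ B = (1 / (2 * T)) • C + X := by
  have hhalf : T⁻¹ = 2 * (1 / (2 * T)) := by field_simp
  have hCexp : Commute (T⁻¹ • C) (exp C) := ((Commute.refl C).exp_right).smul_left _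
  constructor
  · intro h
    have h0 : B + Bᵀ = T⁻¹ • C := by simpa using h 0 ⟨le_rfl, hT.le⟩
    have h1 : B * exp C + exp C * Bᵀ = T⁻¹ • C * exp C := by
      simpa [hT.ne'] using h T ⟨hT.le, le_rfl⟩
    have hB : Commute B (exp C) := commute_of_add_transpose_eq h0 h1 hCexp
    refine ⟨B - (1 / (2 * T)) • C, ?_, hB.sub_left (((Commute.refl C).exp_right).smul_left _),
      by abel⟩
    rw [transpose_sub, transpose_smul, hC, eq_sub_of_add_eq' h0, hhalf]
    module
  · rintro ⟨X, hX, hXM, rfl⟩ t -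
    have hXC := (isHermitian_iff_isSymm.mpr hC).commute_of_commute_exp hXM
    rw [smul_add_mul_add_mul_transpose _ hC hX ((Commute.refl C).smul_right _).exp_right
      (hXC.smul_right _).exp_right, ← hhalf]

open scoped Matrix.Norms.L2Operator in
theorem hasDerivAt_mul_exp_div_smul_mul_apply (S C : Matrix n n ℝ) (T t : ℝ) (i j : n) :
    HasDerivAt (fun s => (S * exp ((s / T) • C) * S) i j)
      ((S * (T⁻¹ • (C * exp ((t / T) • C))) * S) i j) t := by
  have hdiv : HasDerivAt (fun s : ℝ => s / T) T⁻¹ t := by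
    simpa using (hasDerivAt_id t).div_const T
  have hE : HasDerivAt (fun s : ℝ => exp ((s / T) • C)) (T⁻¹ • (C * exp ((t / T) • C))) t :=
    (hasDerivAt_exp_smul_const' C (t / T) |>.scomp t hdiv :)
  exact (entryLinearMap ℝ ℝ i j).toContinuousLinearMap.hasFDerivAt.comp_hasDerivAt t
    ((hE.const_mul S).mul_const S)

end Matrix

theorem inducesPath_congr_exp_iff {n : ℕ} {T : ℝ} (hT : 0 < T) {R C : Matrix (Fin n) (Fin n) ℝ}
    (hRT : Rᵀ = R) (hRu : IsUnit R) (hC : C.IsSymm) (A : Matrix (Fin n) (Fin n) ℝ) :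
    InducesPath T (fun t => R * exp ((t / T) • C) * R) A ↔
      ∃ X, Xᵀ = -X ∧ Commute X (exp C) ∧ R⁻¹ * A * R = (1 / (2 * T)) • C + X := by
  rw [inducesPath_iff_of_hasDerivAt hT (hasDerivAt_mul_exp_div_smul_mul_apply R C T)]
  simp only [mul_congr_add_congr_mul_transpose hRT hRu, hRu.mul_left_inj, hRu.mul_right_inj]
  exact mul_exp_add_exp_mul_transpose_iff hC hT

theorem fisher_inducing_generators_general
    {n : ℕ} (T : ℝ) (hT : 0 < T)
    (S0 ST R0 C : Matrix (Fin n) (Fin n) ℝ)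
    (hR0 : R0.PosDef) (hR0sq : R0 * R0 = S0)
    (hCsymm : C.IsSymm) (hCexp : exp C = R0⁻¹ * ST * R0⁻¹) :
    (∀ A : Matrix (Fin n) (Fin n) ℝ,
      InducesPath T (fun t => R0 * exp ((t / T) • C) * R0) A ↔
      ∃ X : Matrix (Fin n) (Fin n) ℝ,
        Xᵀ = -X ∧ X * (R0⁻¹ * ST * R0⁻¹) = (R0⁻¹ * ST * R0⁻¹) * X ∧
        A = (1 / (2 * T)) • (R0 * C * R0⁻¹) + R0 * X * R0⁻¹) ∧
    -- if `M` has `n` distinct eigenvalues, then `A^F` is the unique generator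
    (∀ hM : (R0⁻¹ * ST * R0⁻¹).IsHermitian, Function.Injective hM.eigenvalues →
      ∀ A : Matrix (Fin n) (Fin n) ℝ,
        InducesPath T (fun t => R0 * exp ((t / T) • C) * R0) A →
        A = (1 / (2 * T)) • (R0 * C * R0⁻¹)) ∧
    -- `A^F` is a generator, satisfies `A Σ_0 = Σ_0 Aᵀ`, and is the unique such generator
    InducesPath T (fun t => R0 * exp ((t / T) • C) * R0)
      ((1 / (2 * T)) • (R0 * C * R0⁻¹)) ∧
    ((1 / (2 * T)) • (R0 * C * R0⁻¹)) * S0 = S0 * ((1 / (2 * T)) • (R0 * C * R0⁻¹))ᵀ ∧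
    (∀ A : Matrix (Fin n) (Fin n) ℝ,
      InducesPath T (fun t => R0 * exp ((t / T) • C) * R0) A →
      A * S0 = S0 * Aᵀ →
      A = (1 / (2 * T)) • (R0 * C * R0⁻¹)) := by
  have hRT : R0ᵀ = R0 := isHermitian_iff_isSymm.mp hR0.isHermitian
  have hRu : IsUnit R0 := hR0.isUnit
  have hgen := inducesPath_congr_exp_iff hT hRT hRu hCsymm
  have hconj : ∀ A X, A = (1 / (2 * T)) • (R0 * C * R0⁻¹) + R0 * X * R0⁻¹ ↔
      R0⁻¹ * A * R0 = (1 / (2 * T)) • C + X := fun A X => by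
    rw [inv_mul_mul_eq_iff hRu, mul_add, add_mul, mul_smul_comm, smul_mul_assoc]
  have hAF : R0⁻¹ * ((1 / (2 * T)) • (R0 * C * R0⁻¹)) * R0 = (1 / (2 * T)) • C := by
    simpa using (hconj _ 0).mp rfl
  rw [← hR0sq, ← hCexp]
  refine ⟨fun A => by simp only [hconj, hgen]; rfl, ?_,
    (hgen _).mpr ⟨0, by simp, by simp, by rw [hAF, add_zero]⟩, ?_, ?_⟩
  · intro hM hinj A hA
    obtain ⟨X, hX, hXM, hB⟩ := (hgen A).mp hA
    obtain rfl : X = 0 := eq_zero_of_isSymm_of_transpose_eq_neg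
      (isHermitian_iff_isSymm.mp (hM.isHermitian_of_commute hinj hXM)) hX
    simpa using (hconj A 0).mpr hB
  · rw [mul_mul_self_eq_iff_isSymm hRT hRu, hAF]
    exact hCsymm.smul _
  · intro A hA hsymm
    obtain ⟨X, hX, -, hB⟩ := (hgen A).mp hA
    have hBsymm := (mul_mul_self_eq_iff_isSymm hRT hRu A).mp hsymm
    rw [hB] at hBsymm
    obtain rfl : X = 0 := eq_zero_of_isSymm_of_transpose_eq_neg
      (by simpa using hBsymm.sub (hCsymm.smul (1 / (2 * T)))) hX
    simpa using (hconj A 0).mpr hB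

/-- characterization of the Fisher-geodesic-inducing generators.
Here `R0` is the (unique) symmetric positive definite square root `Σ_0^{1/2}`,
`M = Σ_0^{−1/2} Σ_T Σ_0^{−1/2}`, `C` is the unique symmetric matrix with `exp C = M`,
`A^F = (1/(2T)) Σ_0^{1/2} C Σ_0^{−1/2}` and `Σ^F_t = Σ_0^{1/2} exp((t/T)C) Σ_0^{1/2}`. -/
theorem fisher_inducing_generators
    {n : ℕ} (T : ℝ) (hT : 0 < T)
    (S0 ST R0 C : Matrix (Fin n) (Fin n) ℝ)
    (hS0 : S0.PosDef) (hST : ST.PosDef)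
    (hR0 : R0.PosDef) (hR0sq : R0 * R0 = S0)
    (hCsymm : C.IsSymm) (hCexp : exp C = R0⁻¹ * ST * R0⁻¹) :
    (∀ A : Matrix (Fin n) (Fin n) ℝ,
      InducesPath T (fun t => R0 * exp ((t / T) • C) * R0) A ↔
      ∃ X : Matrix (Fin n) (Fin n) ℝ,
        Xᵀ = -X ∧ X * (R0⁻¹ * ST * R0⁻¹) = (R0⁻¹ * ST * R0⁻¹) * X ∧
        A = (1 / (2 * T)) • (R0 * C * R0⁻¹) + R0 * X * R0⁻¹) ∧
    -- if `M` has `n` distinct eigenvalues, then `A^F` is the unique generator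
    (∀ hM : (R0⁻¹ * ST * R0⁻¹).IsHermitian, Function.Injective hM.eigenvalues →
      ∀ A : Matrix (Fin n) (Fin n) ℝ,
        InducesPath T (fun t => R0 * exp ((t / T) • C) * R0) A →
        A = (1 / (2 * T)) • (R0 * C * R0⁻¹)) ∧
    -- `A^F` is a generator, satisfies `A Σ_0 = Σ_0 Aᵀ`, and is the unique such generator
    InducesPath T (fun t => R0 * exp ((t / T) • C) * R0)
      ((1 / (2 * T)) • (R0 * C * R0⁻¹)) ∧
    ((1 / (2 * T)) • (R0 * C * R0⁻¹)) * S0 = S0 * ((1 / (2 * T)) • (R0 * C * R0⁻¹))ᵀ ∧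
    (∀ A : Matrix (Fin n) (Fin n) ℝ,
      InducesPath T (fun t => R0 * exp ((t / T) • C) * R0) A →
      A * S0 = S0 * Aᵀ →
      A = (1 / (2 * T)) • (R0 * C * R0⁻¹)) :=
  fisher_inducing_generators_general T hT S0 ST R0 C hR0 hR0sq hCsymm hCexp
end

section
/- Let T>0 and Σ_init, Σ_fin ∈ S₊ⁿ. Set M := Σ_init^{−1/2} Σ_fin Σ_init^{−1/2}, let C be the unique symmetric matrix with exp(C) = M, and define A^F := (1/(2T)) Σ_init^{1/2} C Σ_init^{−1/2} and Σ^F_t := Σ_init^{1/2} exp((t/T)C) Σ_init^{1/2}. Suppose A : [0,T] → ℝ^{n×n} is constant (A_t ≡ A), Σ : [0,T] → S₊ⁿ is differentiable with Σ̇_t = AΣ_t + Σ_tAᵀ for all t, Σ_0 = Σ_init, Σ_T = Σ_fin, and AΣ_t = Σ_tAᵀ for all t ∈ [0,T]. Then A = A^F and Σ_t = Σ^F_t for all t ∈ [0,T]. Conversely, the constant control A^F together with Σ^F satisfies all of these conditions. -/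
/-!
Write `R = Σ_init^{1/2}`. Along a solution with `A Σ_t = Σ_t Aᵀ` the Lyapunov equation collapses
to `Σ̇ = 2 A Σ`, so `Σ_t = exp (2 t A) Σ_init`. The commutation at `t = 0` says exactly that
`B = R⁻¹ A R` is symmetric, and the endpoint condition becomes `exp (2 T B) = R⁻¹ Σ_fin R⁻¹`,
which is `exp C`. Since `exp` is injective on symmetric matrices (the continuous functional
calculus provides `log` as a left inverse), `2 T B = C`, which pins down `A` and then `Σ`.
The converse is a direct computation, using only that `C` commutes with `exp (s C)`.
-/

open Matrix Set NormedSpace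

section BanachAlgebra

variable {𝔸 : Type*} [NormedRing 𝔸] [NormedAlgebra ℝ 𝔸] [CompleteSpace 𝔸]

theorem exp_smul_mul_exp_neg_smul (A : 𝔸) (t : ℝ) : exp (t • A) * exp (-t • A) = 1 := by
  let +nondep : NormedAlgebra ℚ 𝔸 := .restrictScalars ℚ ℝ 𝔸
  rw [← NormedSpace.exp_add_of_commute (((Commute.refl A).smul_left _).smul_right _), ← add_smul,
    add_neg_cancel, zero_smul, exp_zero]

theorem eq_exp_smul_mul_of_hasDerivWithinAt {A : 𝔸} {S : ℝ → 𝔸} {a b : ℝ}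
    (hS : ∀ t ∈ Icc a b, HasDerivWithinAt S (A * S t) (Icc a b) t) :
    ∀ t ∈ Icc a b, S t = exp ((t - a) • A) * S a := by
  have hconst : ∀ t ∈ Icc a b,
      HasDerivWithinAt (fun u => exp ((a - u) • A) * S u) 0 (Icc a b) t := by
    intro t ht
    have hexp : HasDerivAt (fun u : ℝ => exp ((a - u) • A)) (-(A * exp ((a - t) • A))) t :=
      ((hasDerivAt_exp_smul_const' A (a - t)).scomp t
        ((hasDerivAt_id t).const_sub a)).congr_deriv (neg_one_smul ℝ _)
    convert hexp.hasDerivWithinAt.fun_mul (hS t ht) using 1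
    rw [((Commute.refl A).smul_right _).exp_right.eq]
    noncomm_ring
  have hS_eq := constant_of_has_deriv_right_zero (fun t ht => (hconst t ht).continuousWithinAt)
    fun t ht => (hconst t ⟨ht.1, ht.2.le⟩).mono_of_mem_nhdsWithin (Icc_mem_nhdsGE_of_mem ht)
  intro t ht
  have hinv := exp_smul_mul_exp_neg_smul A (t - a)
  rw [neg_sub] at hinv
  simpa [← mul_assoc, hinv] using congrArg (exp ((t - a) • A) * ·) (hS_eq t ht)

end BanachAlgebra

theorem exp_injOn_isSelfAdjoint {A : Type*} [NormedRing A] [StarRing A] [NormedAlgebra ℝ A]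
    [ContinuousFunctionalCalculus ℝ A IsSelfAdjoint] :
    InjOn (exp : A → A) {a | IsSelfAdjoint a} :=
  fun a ha b hb h => by rw [← CFC.log_exp a ha, h, CFC.log_exp b hb]

namespace Matrix

theorem hasDerivWithinAt_iff_forall_apply {m n : Type*} [Fintype n] {f : ℝ → Matrix m n ℝ}
    {f' : Matrix m n ℝ} {s : Set ℝ} {t : ℝ} :
    HasDerivWithinAt f f' s t ↔ ∀ i j, HasDerivWithinAt (fun u => f u i j) (f' i j) s t := by
  have h := hasDerivWithinAt_pi (φ := fun u => (f u : m → n → ℝ)) (φ' := (f' : m → n → ℝ))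
    (s := s) (x := t)
  simp only [hasDerivWithinAt_pi] at h
  exact h

variable {m : Type*} [Fintype m] [DecidableEq m]

theorem eq_exp_smul_mul_of_hasDerivWithinAt_apply {A : Matrix m m ℝ} {S : ℝ → Matrix m m ℝ}
    {a b : ℝ}
    (hS : ∀ t ∈ Icc a b, ∀ i j, HasDerivWithinAt (fun u => S u i j) ((A * S t) i j) (Icc a b) t) :
    ∀ t ∈ Icc a b, S t = exp ((t - a) • A) * S a :=
  -- any Banach-algebra norm will do: `HasDerivWithinAt` and `exp` only see the topology
  let _ := Matrix.linftyOpNormedRing (n := m) (α := ℝ)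
  let _ := Matrix.linftyOpNormedAlgebra (n := m) (R := ℝ) (α := ℝ)
  eq_exp_smul_mul_of_hasDerivWithinAt fun t ht => hasDerivWithinAt_iff_forall_apply.2 (hS t ht)

theorem hasDerivWithinAt_apply_mul_exp_div_smul_mul (P C Q : Matrix m m ℝ) (c : ℝ) (s : Set ℝ)
    (t : ℝ) (i j : m) :
    HasDerivWithinAt (fun u => (P * exp ((u / c) • C) * Q) i j)
      ((P * (c⁻¹ • (C * exp ((t / c) • C))) * Q) i j) s t := by
  let _ := Matrix.linftyOpNormedRing (n := m) (α := ℝ)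
  let _ := Matrix.linftyOpNormedAlgebra (n := m) (R := ℝ) (α := ℝ)
  have hexp : HasDerivAt (fun u : ℝ => exp ((u / c) • C))
      (c⁻¹ • (C * exp ((t / c) • C))) t := by
    exact ((hasDerivAt_exp_smul_const' C (t / c)).scomp t
        ((hasDerivAt_id t).div_const c)).congr_deriv (by rw [one_div])
  exact hasDerivWithinAt_iff_forall_apply.1 ((hexp.const_mul P).mul_const Q).hasDerivWithinAt i j

theorem IsSymm.eq_of_exp_eq {B C : Matrix m m ℝ} (hB : B.IsSymm) (hC : C.IsSymm)
    (h : NormedSpace.exp B = NormedSpace.exp C) : B = C :=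
  let _ := instL2OpNormedRing (n := m) (𝕜 := ℝ)
  let _ := instL2OpNormedAlgebra (n := m) (𝕜 := ℝ)
  exp_injOn_isSelfAdjoint (isHermitian_iff_isSymm.2 hB) (isHermitian_iff_isSymm.2 hC) h

theorem IsSymm.posDef_exp {C : Matrix m m ℝ} (hC : C.IsSymm) : (NormedSpace.exp C).PosDef := by
  have hhalf : ((2⁻¹ : ℝ) • C).IsSymm := hC.smul _
  have hsplit : NormedSpace.exp C =
      (NormedSpace.exp ((2⁻¹ : ℝ) • C))ᵀ * NormedSpace.exp ((2⁻¹ : ℝ) • C) := by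
    rw [hhalf.exp.eq, ← Matrix.exp_add_of_commute _ _ (Commute.refl _), ← add_smul]
    norm_num
  rw [hsplit, ← conjTranspose_eq_transpose_of_trivial]
  exact PosDef.conjTranspose_mul_self _ (mulVec_injective_iff_isUnit.2 (isUnit_exp _))

variable {R A C : Matrix m m ℝ}

theorem eq_exp_smul_mul_of_lyapunov_of_commute {S : ℝ → Matrix m m ℝ} {a b : ℝ}
    (hS : ∀ t ∈ Icc a b, ∀ i j,
      HasDerivWithinAt (fun u => S u i j) ((A * S t + S t * Aᵀ) i j) (Icc a b) t)
    (hAS : ∀ t ∈ Icc a b, A * S t = S t * Aᵀ) :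
    ∀ t ∈ Icc a b, S t = exp ((2 * (t - a)) • A) * S a := by
  have hS' : ∀ t ∈ Icc a b, ∀ i j,
      HasDerivWithinAt (fun u => S u i j) (((2 : ℝ) • A * S t) i j) (Icc a b) t := by
    intro t ht
    rw [two_smul, add_mul]
    nth_rw 2 [hAS t ht]
    exact hS t ht
  intro t ht
  rw [mul_comm, ← smul_smul]
  exact eq_exp_smul_mul_of_hasDerivWithinAt_apply hS' t ht

theorem conj_mul_mul_mul_self (hR : IsUnit R) (B X : Matrix m m ℝ) :
    R * B * R⁻¹ * (R * X * R) = R * (B * X) * R := by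
  simp only [Matrix.mul_assoc, nonsing_inv_mul_cancel_left _ _ ((isUnit_iff_isUnit_det R).1 hR)]

theorem mul_mul_self_mul_transpose_conj (hRs : R.IsSymm) (hR : IsUnit R) (B X : Matrix m m ℝ) :
    R * X * R * (R * B * R⁻¹)ᵀ = R * (X * Bᵀ) * R := by
  rw [transpose_mul, transpose_mul, transpose_nonsing_inv, hRs.eq]
  simp only [Matrix.mul_assoc, mul_nonsing_inv_cancel_left _ _ ((isUnit_iff_isUnit_det R).1 hR)]

theorem isSymm_inv_mul_mul_of_mul_mul_self_eq (hRs : R.IsSymm) (hR : IsUnit R)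
    (h : A * (R * R) = R * R * Aᵀ) : (R⁻¹ * A * R).IsSymm := by
  have hdet := (isUnit_iff_isUnit_det R).1 hR
  change (R⁻¹ * A * R)ᵀ = R⁻¹ * A * R
  calc (R⁻¹ * A * R)ᵀ = R⁻¹ * (R * R * Aᵀ) * R⁻¹ := by
        rw [transpose_mul, transpose_mul, transpose_nonsing_inv, hRs.eq]
        simp only [Matrix.mul_assoc, nonsing_inv_mul_cancel_left _ _ hdet]
    _ = R⁻¹ * (A * (R * R)) * R⁻¹ := by rw [h]
    _ = R⁻¹ * A * R := by
        simp only [Matrix.mul_assoc, mul_nonsing_inv _ hdet, Matrix.mul_one]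

theorem eq_conj_of_exp_mul_eq (hR : IsUnit R) (hA : (R⁻¹ * A * R).IsSymm) (hC : C.IsSymm)
    (h : exp A * R = R * exp C) : A = R * C * R⁻¹ := by
  have hdet := (isUnit_iff_isUnit_det R).1 hR
  have hexp : exp (R⁻¹ * A * R) = exp C := by
    rw [exp_conj' _ _ hR, Matrix.mul_assoc, h, nonsing_inv_mul_cancel_left _ _ hdet]
  rw [← hA.eq_of_exp_eq hC hexp]
  simp only [Matrix.mul_assoc, mul_nonsing_inv_cancel_left _ _ hdet, mul_nonsing_inv _ hdet,
    Matrix.mul_one]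

end Matrix

section FisherPair

variable {m : Type*} [Fintype m] [DecidableEq m] {R C : Matrix m m ℝ}

noncomputable def fisherControl (R C : Matrix m m ℝ) (T : ℝ) : Matrix m m ℝ :=
  (1 / (2 * T)) • (R * C * R⁻¹)

noncomputable def fisherCurve (R C : Matrix m m ℝ) (T t : ℝ) : Matrix m m ℝ :=
  R * exp ((t / T) • C) * R

theorem fisherControl_eq (R C : Matrix m m ℝ) (T : ℝ) :
    fisherControl R C T = R * ((1 / (2 * T)) • C) * R⁻¹ := by
  rw [fisherControl, Matrix.mul_smul, Matrix.smul_mul]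

theorem fisherCurve_zero (R C : Matrix m m ℝ) (T : ℝ) : fisherCurve R C T 0 = R * R := by
  simp [fisherCurve]

theorem fisherCurve_self (R C : Matrix m m ℝ) {T : ℝ} (hT : T ≠ 0) :
    fisherCurve R C T T = R * exp C * R := by
  rw [fisherCurve, div_self hT, one_smul]

theorem fisherControl_mul_fisherCurve (hR : IsUnit R) (T t : ℝ) :
    fisherControl R C T * fisherCurve R C T t =
      R * ((1 / (2 * T)) • C * exp ((t / T) • C)) * R := by
  rw [fisherControl_eq, fisherCurve, conj_mul_mul_mul_self hR]

theorem fisherCurve_mul_transpose_fisherControl (hRs : R.IsSymm) (hR : IsUnit R) (hC : C.IsSymm)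
    (T t : ℝ) :
    fisherCurve R C T t * (fisherControl R C T)ᵀ =
      R * ((1 / (2 * T)) • C * exp ((t / T) • C)) * R := by
  rw [fisherControl_eq, fisherCurve, mul_mul_self_mul_transpose_conj hRs hR, transpose_smul,
    hC.eq, (((Commute.refl C).smul_left _).exp_left.smul_right _).eq]

theorem fisherControl_mul_fisherCurve_eq_mul_transpose (hRs : R.IsSymm) (hR : IsUnit R)
    (hC : C.IsSymm) (T t : ℝ) :
    fisherControl R C T * fisherCurve R C T t =
      fisherCurve R C T t * (fisherControl R C T)ᵀ := by
  rw [fisherControl_mul_fisherCurve hR, fisherCurve_mul_transpose_fisherControl hRs hR hC]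

theorem hasDerivWithinAt_fisherCurve_apply (hRs : R.IsSymm) (hR : IsUnit R) (hC : C.IsSymm)
    (T : ℝ) (s : Set ℝ) (t : ℝ) (i j : m) :
    HasDerivWithinAt (fun u => fisherCurve R C T u i j)
      ((fisherControl R C T * fisherCurve R C T t +
        fisherCurve R C T t * (fisherControl R C T)ᵀ) i j) s t := by
  refine (hasDerivWithinAt_apply_mul_exp_div_smul_mul R C R T s t i j).congr_deriv ?_
  rw [fisherControl_mul_fisherCurve hR, fisherCurve_mul_transpose_fisherControl hRs hR hC,
    ← add_mul, ← Matrix.mul_add, smul_mul_assoc, ← add_smul,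
    show 1 / (2 * T) + 1 / (2 * T) = T⁻¹ by ring]

theorem posDef_fisherCurve (hRs : R.IsSymm) (hR : IsUnit R) (hC : C.IsSymm) (T t : ℝ) :
    (fisherCurve R C T t).PosDef := by
  have hE := (hC.smul (t / T)).posDef_exp
  rwa [← IsUnit.posDef_star_right_conjugate_iff hR, star_eq_conjTranspose,
    conjTranspose_eq_transpose_of_trivial, hRs.eq] at hE

theorem exp_smul_fisherControl_mul_self (hR : IsUnit R) {T : ℝ} (hT : T ≠ 0) (t : ℝ) :
    exp ((2 * t) • fisherControl R C T) * (R * R) = fisherCurve R C T t := by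
  rw [fisherControl, smul_smul, ← Matrix.smul_mul, ← Matrix.mul_smul, exp_conj _ _ hR, fisherCurve]
  simp only [Matrix.mul_assoc, nonsing_inv_mul_cancel_left _ _ ((isUnit_iff_isUnit_det R).1 hR)]
  congr 4
  field_simp

theorem eq_fisherControl_of_exp_mul_self_eq (hRs : R.IsSymm) (hR : IsUnit R) (hC : C.IsSymm)
    {A : Matrix m m ℝ} {T : ℝ} (hT : T ≠ 0) (hAR : A * (R * R) = R * R * Aᵀ)
    (hexp : exp ((2 * T) • A) * (R * R) = R * exp C * R) :
    A = fisherControl R C T := by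
  have hsymm : (R⁻¹ * ((2 * T) • A) * R).IsSymm := by
    simpa only [Matrix.mul_smul, Matrix.smul_mul] using
      (isSymm_inv_mul_mul_of_mul_mul_self_eq hRs hR hAR).smul (2 * T)
  have hA := eq_conj_of_exp_mul_eq hR hsymm hC
    (hR.mul_left_inj.1 (by simpa only [Matrix.mul_assoc] using hexp))
  rw [fisherControl, ← hA, smul_smul, one_div_mul_cancel (by simpa using hT), one_smul]

end FisherPair

theorem fisher_pair_unique_commuting_constant_control_general
    {n : ℕ} (T : ℝ) (hT : 0 < T)
    (Si Sf R0 C : Matrix (Fin n) (Fin n) ℝ)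
    (hR0 : R0.PosDef) (hR0sq : R0 * R0 = Si)
    (hCsymm : C.IsSymm) (hCexp : exp C = R0⁻¹ * Sf * R0⁻¹) :
    -- uniqueness: any constant commuting solution is the Fisher pair
    (∀ (A : Matrix (Fin n) (Fin n) ℝ) (S : ℝ → Matrix (Fin n) (Fin n) ℝ),
      (∀ t ∈ Icc (0:ℝ) T, ∀ i j,
        HasDerivWithinAt (fun s => S s i j) ((A * S t + S t * Aᵀ) i j) (Icc (0:ℝ) T) t) →
      (∀ t ∈ Icc (0:ℝ) T, (S t).PosDef) →
      S 0 = Si → S T = Sf →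
      (∀ t ∈ Icc (0:ℝ) T, A * S t = S t * Aᵀ) →
      A = (1 / (2 * T)) • (R0 * C * R0⁻¹) ∧
      ∀ t ∈ Icc (0:ℝ) T, S t = R0 * exp ((t / T) • C) * R0) ∧
    -- conversely, the Fisher pair satisfies all of these conditions
    ((∀ t ∈ Icc (0:ℝ) T, ∀ i j,
      HasDerivWithinAt (fun s => (R0 * exp ((s / T) • C) * R0) i j)
        ((((1 / (2 * T)) • (R0 * C * R0⁻¹)) * (R0 * exp ((t / T) • C) * R0) +
          (R0 * exp ((t / T) • C) * R0) * ((1 / (2 * T)) • (R0 * C * R0⁻¹))ᵀ) i j)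
        (Icc (0:ℝ) T) t) ∧
    (∀ t ∈ Icc (0:ℝ) T, (R0 * exp ((t / T) • C) * R0).PosDef) ∧
    R0 * exp ((0 / T : ℝ) • C) * R0 = Si ∧
    R0 * exp ((T / T : ℝ) • C) * R0 = Sf ∧
    (∀ t ∈ Icc (0:ℝ) T,
      ((1 / (2 * T)) • (R0 * C * R0⁻¹)) * (R0 * exp ((t / T) • C) * R0) =
      (R0 * exp ((t / T) • C) * R0) * ((1 / (2 * T)) • (R0 * C * R0⁻¹))ᵀ)) := by
  have hRs : R0.IsSymm := isHermitian_iff_isSymm.1 hR0.isHermitian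
  have hR : IsUnit R0 := hR0.isUnit
  have hdet := (isUnit_iff_isUnit_det R0).1 hR
  have hSf : Sf = R0 * exp C * R0 := by
    simp only [hCexp, Matrix.mul_assoc, mul_nonsing_inv_cancel_left _ _ hdet,
      nonsing_inv_mul _ hdet, Matrix.mul_one]
  subst hR0sq hSf
  refine ⟨fun A S hS _ hS0 hST hAS => ?_,
    fun t _ => hasDerivWithinAt_fisherCurve_apply hRs hR hCsymm T _ t,
    fun t _ => posDef_fisherCurve hRs hR hCsymm T t, fisherCurve_zero R0 C T,
    fisherCurve_self R0 C hT.ne',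
    fun t _ => fisherControl_mul_fisherCurve_eq_mul_transpose hRs hR hCsymm T t⟩
  have hflow := eq_exp_smul_mul_of_lyapunov_of_commute hS hAS
  have hA : A = fisherControl R0 C T := by
    refine eq_fisherControl_of_exp_mul_self_eq hRs hR hCsymm hT.ne' ?_ ?_
    · simpa [hS0] using hAS 0 ⟨le_rfl, hT.le⟩
    · simpa [hS0, hST] using (hflow T ⟨hT.le, le_rfl⟩).symm
  refine ⟨hA, fun t ht => ?_⟩
  rw [hflow t ht, hS0, hA, sub_zero]
  exact exp_smul_fisherControl_mul_self hR hT.ne' t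

/-- the Fisher–Rao pair is the unique constant-control, commuting
solution of the zero-noise Lyapunov steering problem.  Here `R0 = Σ_init^{1/2}` is the
unique symmetric positive definite square root, `M = Σ_init^{−1/2} Σ_fin Σ_init^{−1/2}`,
`C` the unique symmetric matrix with `exp C = M`,
`A^F = (1/(2T)) Σ_init^{1/2} C Σ_init^{−1/2}` and
`Σ^F_t = Σ_init^{1/2} exp((t/T)C) Σ_init^{1/2}`. -/
theorem fisher_pair_unique_commuting_constant_control
    {n : ℕ} (T : ℝ) (hT : 0 < T)
    (Si Sf R0 C : Matrix (Fin n) (Fin n) ℝ)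
    (hSi : Si.PosDef) (hSf : Sf.PosDef)
    (hR0 : R0.PosDef) (hR0sq : R0 * R0 = Si)
    (hCsymm : C.IsSymm) (hCexp : exp C = R0⁻¹ * Sf * R0⁻¹) :
    -- uniqueness: any constant commuting solution is the Fisher pair
    (∀ (A : Matrix (Fin n) (Fin n) ℝ) (S : ℝ → Matrix (Fin n) (Fin n) ℝ),
      (∀ t ∈ Icc (0:ℝ) T, ∀ i j,
        HasDerivWithinAt (fun s => S s i j) ((A * S t + S t * Aᵀ) i j) (Icc (0:ℝ) T) t) →
      (∀ t ∈ Icc (0:ℝ) T, (S t).PosDef) →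
      S 0 = Si → S T = Sf →
      (∀ t ∈ Icc (0:ℝ) T, A * S t = S t * Aᵀ) →
      A = (1 / (2 * T)) • (R0 * C * R0⁻¹) ∧
      ∀ t ∈ Icc (0:ℝ) T, S t = R0 * exp ((t / T) • C) * R0) ∧
    -- conversely, the Fisher pair satisfies all of these conditions
    ((∀ t ∈ Icc (0:ℝ) T, ∀ i j,
      HasDerivWithinAt (fun s => (R0 * exp ((s / T) • C) * R0) i j)
        ((((1 / (2 * T)) • (R0 * C * R0⁻¹)) * (R0 * exp ((t / T) • C) * R0) +
          (R0 * exp ((t / T) • C) * R0) * ((1 / (2 * T)) • (R0 * C * R0⁻¹))ᵀ) i j)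
        (Icc (0:ℝ) T) t) ∧
    (∀ t ∈ Icc (0:ℝ) T, (R0 * exp ((t / T) • C) * R0).PosDef) ∧
    R0 * exp ((0 / T : ℝ) • C) * R0 = Si ∧
    R0 * exp ((T / T : ℝ) • C) * R0 = Sf ∧
    (∀ t ∈ Icc (0:ℝ) T,
      ((1 / (2 * T)) • (R0 * C * R0⁻¹)) * (R0 * exp ((t / T) • C) * R0) =
      (R0 * exp ((t / T) • C) * R0) * ((1 / (2 * T)) • (R0 * C * R0⁻¹))ᵀ)) :=
  fisher_pair_unique_commuting_constant_control_general T hT Si Sf R0 C hR0 hR0sq hCsymm hCexp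
end

section
/- Let T>0, α, β ∈ (0,1), and 0 < c ≤ C. Suppose A : [0,T] → ℝ^{n×n} is continuously differentiable and Σ : [0,T] → Sⁿ is continuous with cI ≤ Σ_t ≤ CI for all t ∈ [0,T]. Define the Fisher geodesic-inducing cost F_β(A,Σ) := β∫₀ᵀ tr((A_t − Σ_tA_tᵀΣ_t^{−1}) Σ_t (A_t − Σ_tA_tᵀΣ_t^{−1})ᵀ) dt + (1−β)∫₀ᵀ tr(Ȧ_tΣ_tȦ_tᵀ) dt and the attention functional J_α(A,Σ) := α∫₀ᵀ tr(A_tA_tᵀ)dt + (1−α)∫₀ᵀ tr(Ȧ_tΣ_tȦ_tᵀ)dt. Then F_β(A,Σ) ≤ K · J_α(A,Σ) with K := max(4βC²/(αc), (1−β)/(1−α)). -/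
/-!
With `M = A - Σ Aᵀ Σ⁻¹` one has `M Σ = A Σ - (A Σ)ᵀ`. Conjugating `c I ≤ Σ ≤ C I` by `Σ^{1/2}`
gives `c Σ ≤ Σ² ≤ C² I`, so
`c · tr(M Σ Mᵀ) ≤ ‖A Σ - (A Σ)ᵀ‖_F² ≤ 4 ‖A Σ‖_F² ≤ 4 C² ‖A‖_F²`
by the parallelogram law. Integrating this pointwise bound, the weighted sums `F_β` and `J_α`
are then compared term by term.
-/

open MeasureTheory Matrix Set

def LoewnerLE {n : ℕ} (P Q : Matrix (Fin n) (Fin n) ℝ) : Prop :=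
  (Q - P).PosSemidef

section SqrtConjugation

open CFC

variable {A : Type*} [PartialOrder A] [Ring A] [StarRing A] [TopologicalSpace A] [Algebra ℝ A]
  [StarOrderedRing A] [ContinuousFunctionalCalculus ℝ A IsSelfAdjoint] [NonnegSpectrumClass ℝ A]
  [IsSemitopologicalRing A] [T2Space A] {a : A}

lemma sqrt_mul_smul_one_mul_sqrt (ha : 0 ≤ a) (r : ℝ) :
    sqrt a * (r • 1) * sqrt a = r • a := by
  rw [mul_smul_comm, mul_one, smul_mul_assoc, sqrt_mul_sqrt_self a ha]

lemma sqrt_mul_self_mul_sqrt (ha : 0 ≤ a) : sqrt a * a * sqrt a = a * a := by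
  have hs := sqrt_mul_sqrt_self a ha
  calc sqrt a * a * sqrt a = sqrt a * (sqrt a * sqrt a) * sqrt a := by rw [hs]
    _ = (sqrt a * sqrt a) * (sqrt a * sqrt a) := by simp only [mul_assoc]
    _ = a * a := by rw [hs]

lemma smul_le_mul_self_of_smul_one_le {r : ℝ} (ha : 0 ≤ a) (h : r • 1 ≤ a) :
    r • a ≤ a * a := by
  simpa only [sqrt_mul_smul_one_mul_sqrt ha, sqrt_mul_self_mul_sqrt ha] using
    conjugate_le_conjugate_of_nonneg h (sqrt_nonneg a)

lemma mul_self_le_smul_of_le_smul_one {r : ℝ} (ha : 0 ≤ a) (h : a ≤ r • 1) :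
    a * a ≤ r • a := by
  simpa only [sqrt_mul_smul_one_mul_sqrt ha, sqrt_mul_self_mul_sqrt ha] using
    conjugate_le_conjugate_of_nonneg h (sqrt_nonneg a)

lemma mul_self_le_sq_smul_one [PosSMulMono ℝ A] {r : ℝ} (ha : 0 ≤ a) (h : a ≤ r • 1)
    (hr : 0 ≤ r) : a * a ≤ r ^ 2 • 1 := by
  calc a * a ≤ r • a := mul_self_le_smul_of_le_smul_one ha h
    _ ≤ r • r • 1 := smul_le_smul_of_nonneg_left h hr
    _ = r ^ 2 • 1 := by rw [smul_smul, sq]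

end SqrtConjugation

open scoped MatrixOrder

namespace Matrix

variable {l m : Type*}

lemma transpose_eq_self_of_nonneg {S : Matrix m m ℝ} (hS : 0 ≤ S) : Sᵀ = S :=
  (isHermitian_iff_isSymm.1 (nonneg_iff_posSemidef.1 hS).isHermitian).eq

variable [Fintype m]

lemma mul_mul_transpose_eq_of_nonneg {S : Matrix m m ℝ} (hS : 0 ≤ S) (M : Matrix l m ℝ) :
    M * (S * S) * Mᵀ = (M * S) * (M * S)ᵀ := by
  rw [transpose_mul, transpose_eq_self_of_nonneg hS, Matrix.mul_assoc, Matrix.mul_assoc,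
    Matrix.mul_assoc]

variable [Fintype l]

lemma trace_mul_transpose_self_nonneg (M : Matrix l m ℝ) : 0 ≤ (M * Mᵀ).trace := by
  simpa only [conjTranspose_eq_transpose_of_trivial] using
    (posSemidef_self_mul_conjTranspose M).trace_nonneg

lemma trace_sub_mul_transpose_sub_le (M N : Matrix l m ℝ) :
    ((M - N) * (M - N)ᵀ).trace ≤ 2 * (M * Mᵀ).trace + 2 * (N * Nᵀ).trace := by
  have := trace_mul_transpose_self_nonneg (M + N)
  simp only [transpose_add, transpose_sub, Matrix.add_mul, Matrix.mul_add, Matrix.sub_mul,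
    Matrix.mul_sub, trace_add, trace_sub] at this ⊢
  linarith

lemma trace_sub_transpose_mul_transpose_le (M : Matrix m m ℝ) :
    ((M - Mᵀ) * (M - Mᵀ)ᵀ).trace ≤ 4 * (M * Mᵀ).trace := by
  have := trace_sub_mul_transpose_sub_le M Mᵀ
  rw [transpose_transpose, trace_mul_comm Mᵀ M] at this
  linarith

lemma trace_mul_mul_transpose_mono {P Q : Matrix m m ℝ} (h : P ≤ Q) (M : Matrix l m ℝ) :
    (M * P * Mᵀ).trace ≤ (M * Q * Mᵀ).trace := by
  have := (h.mul_mul_conjTranspose_same M).trace_nonneg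
  rw [conjTranspose_eq_transpose_of_trivial, Matrix.mul_sub, Matrix.sub_mul, trace_sub] at this
  linarith

lemma trace_mul_mul_transpose_nonneg {P : Matrix m m ℝ} (hP : 0 ≤ P) (M : Matrix l m ℝ) :
    0 ≤ (M * P * Mᵀ).trace := by
  simpa using trace_mul_mul_transpose_mono hP M

variable [DecidableEq m]

lemma smul_trace_mul_mul_transpose_le {c : ℝ} {S : Matrix m m ℝ} (hcS : c • 1 ≤ S)
    (hS : 0 ≤ S) (M : Matrix l m ℝ) :
    c * (M * S * Mᵀ).trace ≤ ((M * S) * (M * S)ᵀ).trace := by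
  have := trace_mul_mul_transpose_mono (smul_le_mul_self_of_smul_one_le hS hcS) M
  rwa [Matrix.mul_smul, Matrix.smul_mul, trace_smul, smul_eq_mul,
    mul_mul_transpose_eq_of_nonneg hS] at this

lemma trace_mul_mul_transpose_le_sq_mul {C : ℝ} {S : Matrix m m ℝ} (hS : 0 ≤ S)
    (hSC : S ≤ C • 1) (hC : 0 ≤ C) (M : Matrix l m ℝ) :
    ((M * S) * (M * S)ᵀ).trace ≤ C ^ 2 * (M * Mᵀ).trace := by
  have := trace_mul_mul_transpose_mono (mul_self_le_sq_smul_one hS hSC hC) M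
  rwa [Matrix.mul_smul, Matrix.mul_one, Matrix.smul_mul, trace_smul, smul_eq_mul,
    mul_mul_transpose_eq_of_nonneg hS] at this

lemma inv_mul_cancel_of_smul_one_le {c : ℝ} (hc : 0 < c) {S : Matrix m m ℝ}
    (hcS : c • 1 ≤ S) : S⁻¹ * S = 1 := by
  have hS : S.PosDef := by simpa using PosDef.posSemidef_add (le_iff.1 hcS) (PosDef.one.smul hc)
  exact nonsing_inv_mul S ((isUnit_iff_isUnit_det S).1 hS.isUnit)

lemma trace_fisher_integrand_le {c C : ℝ} (hc : 0 < c) (hC : 0 ≤ C) {S : Matrix m m ℝ}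
    (hcS : c • 1 ≤ S) (hSC : S ≤ C • 1) (A : Matrix m m ℝ) :
    ((A - S * Aᵀ * S⁻¹) * S * (A - S * Aᵀ * S⁻¹)ᵀ).trace ≤
      4 * C ^ 2 / c * (A * Aᵀ).trace := by
  have hS : 0 ≤ S := (smul_nonneg hc.le zero_le_one).trans hcS
  have hMS : (A - S * Aᵀ * S⁻¹) * S = A * S - (A * S)ᵀ := by
    rw [Matrix.sub_mul, Matrix.mul_assoc _ S⁻¹, inv_mul_cancel_of_smul_one_le hc hcS,
      Matrix.mul_one, transpose_mul, transpose_eq_self_of_nonneg hS]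
  rw [div_mul_eq_mul_div, le_div_iff₀' hc]
  calc c * ((A - S * Aᵀ * S⁻¹) * S * (A - S * Aᵀ * S⁻¹)ᵀ).trace
      ≤ ((A * S - (A * S)ᵀ) * (A * S - (A * S)ᵀ)ᵀ).trace := by
        simpa only [hMS] using smul_trace_mul_mul_transpose_le hcS hS (A - S * Aᵀ * S⁻¹)
    _ ≤ 4 * ((A * S) * (A * S)ᵀ).trace := trace_sub_transpose_mul_transpose_le _
    _ ≤ 4 * (C ^ 2 * (A * Aᵀ).trace) := by
        grw [trace_mul_mul_transpose_le_sq_mul hS hSC hC A]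
    _ = 4 * C ^ 2 * (A * Aᵀ).trace := by ring

end Matrix

lemma add_le_max_div_mul_add {a b p q x y : ℝ} (ha : 0 < a) (hb : 0 < b) (hx : 0 ≤ x)
    (hy : 0 ≤ y) : p * x + q * y ≤ max (p / a) (q / b) * (a * x + b * y) := by
  have hax : 0 ≤ a * x := mul_nonneg ha.le hx
  have hby : 0 ≤ b * y := mul_nonneg hb.le hy
  calc p * x + q * y = p / a * (a * x) + q / b * (b * y) := by field_simp
    _ ≤ max (p / a) (q / b) * (a * x) + max (p / a) (q / b) * (b * y) := by
        gcongr
        · exact le_max_left _ _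
        · exact le_max_right _ _
    _ = max (p / a) (q / b) * (a * x + b * y) := by ring

lemma intervalIntegral.integral_mono_on_of_nonneg {f g : ℝ → ℝ} {a b : ℝ} (hab : a ≤ b)
    (hf : ∀ x ∈ Icc a b, 0 ≤ f x) (h : ∀ x ∈ Icc a b, f x ≤ g x)
    (hg : IntervalIntegrable g volume a b) : ∫ x in a..b, f x ≤ ∫ x in a..b, g x := by
  rw [intervalIntegral.integral_of_le hab, intervalIntegral.integral_of_le hab]
  exact setIntegral_mono_of_nonneg (fun x hx => hf x (Ioc_subset_Icc_self hx))
    (fun x hx => h x (Ioc_subset_Icc_self hx))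
    ((intervalIntegrable_iff_integrableOn_Ioc_of_le hab).1 hg)

theorem fisher_cost_le_attention_general
    {n : ℕ} (T α β c C : ℝ) (hT : 0 < T)
    (hα : α ∈ Set.Ioo (0:ℝ) 1) (hβ : β ∈ Set.Ioo (0:ℝ) 1)
    (hc : 0 < c) (hcC : c ≤ C)
    (A A' S : ℝ → Matrix (Fin n) (Fin n) ℝ)
    -- A is continuously differentiable with derivative A'
    (hAderiv : ∀ t ∈ Icc (0:ℝ) T, ∀ i j,
      HasDerivWithinAt (fun s => A s i j) (A' t i j) (Icc (0:ℝ) T) t)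
    -- Σ is continuous, symmetric-valued, and `cI ≤ Σ_t ≤ CI`
    (hbounds : ∀ t ∈ Icc (0:ℝ) T,
      LoewnerLE (c • (1 : Matrix (Fin n) (Fin n) ℝ)) (S t) ∧
      LoewnerLE (S t) (C • (1 : Matrix (Fin n) (Fin n) ℝ))) :
    β * (∫ t in (0:ℝ)..T,
        Matrix.trace ((A t - S t * (A t)ᵀ * (S t)⁻¹) * S t *
          (A t - S t * (A t)ᵀ * (S t)⁻¹)ᵀ)) +
    (1 - β) * (∫ t in (0:ℝ)..T, Matrix.trace (A' t * S t * (A' t)ᵀ)) ≤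
    max (4 * β * C ^ 2 / (α * c)) ((1 - β) / (1 - α)) *
      (α * (∫ t in (0:ℝ)..T, Matrix.trace (A t * (A t)ᵀ)) +
       (1 - α) * (∫ t in (0:ℝ)..T, Matrix.trace (A' t * S t * (A' t)ᵀ))) := by
  obtain ⟨hα0, hα1⟩ := hα
  obtain ⟨hβ0, -⟩ := hβ
  have hS : ∀ t ∈ Icc 0 T, 0 ≤ S t := fun t ht =>
    (smul_nonneg hc.le zero_le_one).trans (hbounds t ht).1
  have hA : ContinuousOn A (Icc 0 T) := continuousOn_pi.2 fun i => continuousOn_pi.2 fun j t ht =>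
    (hAderiv t ht i j).continuousWithinAt
  have hAA : IntervalIntegrable (fun t => (A t * (A t)ᵀ).trace) volume 0 T :=
    ((continuous_id.matrix_mul continuous_id.matrix_transpose).matrix_trace.comp_continuousOn
      hA).intervalIntegrable_of_Icc hT.le
  have hfisher : ∫ t in (0:ℝ)..T, ((A t - S t * (A t)ᵀ * (S t)⁻¹) * S t *
      (A t - S t * (A t)ᵀ * (S t)⁻¹)ᵀ).trace ≤
      4 * C ^ 2 / c * ∫ t in (0:ℝ)..T, (A t * (A t)ᵀ).trace := by
    rw [← intervalIntegral.integral_const_mul]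
    exact intervalIntegral.integral_mono_on_of_nonneg hT.le
      (fun t ht => trace_mul_mul_transpose_nonneg (hS t ht) _)
      (fun t ht => trace_fisher_integrand_le hc (hc.le.trans hcC) (hbounds t ht).1
        (hbounds t ht).2 (A t))
      (hAA.const_mul _)
  have hAA_nonneg : 0 ≤ ∫ t in (0:ℝ)..T, (A t * (A t)ᵀ).trace :=
    intervalIntegral.integral_nonneg hT.le fun t _ => trace_mul_transpose_self_nonneg (A t)
  have hA'SA'_nonneg : 0 ≤ ∫ t in (0:ℝ)..T, (A' t * S t * (A' t)ᵀ).trace :=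
    intervalIntegral.integral_nonneg hT.le fun t ht => trace_mul_mul_transpose_nonneg (hS t ht) _
  calc _ ≤ β * (4 * C ^ 2 / c) * (∫ t in (0:ℝ)..T, (A t * (A t)ᵀ).trace) +
        (1 - β) * ∫ t in (0:ℝ)..T, (A' t * S t * (A' t)ᵀ).trace := by
        rw [mul_assoc]; gcongr
    _ ≤ _ := add_le_max_div_mul_add hα0 (sub_pos.2 hα1) hAA_nonneg hA'SA'_nonneg
    _ = _ := by congr 2; field_simp

/-- the Fisher geodesic-inducing cost is dominated by a constant multiple
of the attention functional: `F_β(A,Σ) ≤ K · J_α(A,Σ)` with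
`K = max(4βC²/(αc), (1−β)/(1−α))`, whenever `cI ≤ Σ_t ≤ CI`. -/
theorem fisher_cost_le_attention
    {n : ℕ} (T α β c C : ℝ) (hT : 0 < T)
    (hα : α ∈ Set.Ioo (0:ℝ) 1) (hβ : β ∈ Set.Ioo (0:ℝ) 1)
    (hc : 0 < c) (hcC : c ≤ C)
    (A A' S : ℝ → Matrix (Fin n) (Fin n) ℝ)
    -- A is continuously differentiable with derivative A'
    (hAderiv : ∀ t ∈ Icc (0:ℝ) T, ∀ i j,
      HasDerivWithinAt (fun s => A s i j) (A' t i j) (Icc (0:ℝ) T) t)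
    (hA'cont : ∀ i j, ContinuousOn (fun t => A' t i j) (Icc (0:ℝ) T))
    -- Σ is continuous, symmetric-valued, and `cI ≤ Σ_t ≤ CI`
    (hScont : ∀ i j, ContinuousOn (fun t => S t i j) (Icc (0:ℝ) T))
    (hSsymm : ∀ t ∈ Icc (0:ℝ) T, (S t).IsSymm)
    (hbounds : ∀ t ∈ Icc (0:ℝ) T,
      LoewnerLE (c • (1 : Matrix (Fin n) (Fin n) ℝ)) (S t) ∧
      LoewnerLE (S t) (C • (1 : Matrix (Fin n) (Fin n) ℝ))) :
    β * (∫ t in (0:ℝ)..T,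
        Matrix.trace ((A t - S t * (A t)ᵀ * (S t)⁻¹) * S t *
          (A t - S t * (A t)ᵀ * (S t)⁻¹)ᵀ)) +
    (1 - β) * (∫ t in (0:ℝ)..T, Matrix.trace (A' t * S t * (A' t)ᵀ)) ≤
    max (4 * β * C ^ 2 / (α * c)) ((1 - β) / (1 - α)) *
      (α * (∫ t in (0:ℝ)..T, Matrix.trace (A t * (A t)ᵀ)) +
       (1 - α) * (∫ t in (0:ℝ)..T, Matrix.trace (A' t * S t * (A' t)ᵀ))) :=
  fisher_cost_le_attention_general T α β c C hT hα hβ hc hcC A A' S hAderiv hbounds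
end

section
/- Let 0 < c ≤ C, let Σ ∈ ℝ^{n×n} be symmetric with cI ≤ Σ ≤ CI, and let A ∈ ℝ^{n×n} be arbitrary. Then tr((A − ΣAᵀΣ^{−1}) Σ (A − ΣAᵀΣ^{−1})ᵀ) ≤ (4C²/c) · tr(AAᵀ). -/
/-!
With `X = AΣ`, the defect `D = A - ΣAᵀΣ⁻¹` satisfies `DΣ = X - Xᵀ`. The Loewner bound `cΣ ≤ Σ²`
gives `c·tr(DΣDᵀ) ≤ tr((X - Xᵀ)(X - Xᵀ)ᵀ)`, which is at most `4·tr(XXᵀ)` by the parallelogram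
law, and `Σ² ≤ C²I` gives `tr(XXᵀ) = tr(AΣ²Aᵀ) ≤ C²·tr(AAᵀ)`. Both bounds on `Σ²` hold because
`Σ² - cΣ = Σ(Σ - cI)` and `C²I - Σ² = (CI + Σ)(CI - Σ)` are products of commuting positive
semidefinite matrices.
-/

open Matrix

namespace Matrix

open scoped ComplexOrder MatrixOrder in
theorem PosSemidef.mul_of_commute {n 𝕜 : Type*} [Fintype n] [DecidableEq n] [RCLike 𝕜]
    {P Q : Matrix n n 𝕜} (hP : P.PosSemidef) (hQ : Q.PosSemidef) (h : Commute P Q) :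
    (P * Q).PosSemidef := by
  rw [← nonneg_iff_posSemidef] at *
  exact h.mul_nonneg hP hQ

theorem trace_mul_transpose_nonneg {m n : Type*} [Fintype m] [Fintype n] (X : Matrix m n ℝ) :
    0 ≤ (X * Xᵀ).trace := by
  simpa using (posSemidef_self_mul_conjTranspose X).trace_nonneg

theorem trace_sub_transpose_mul_transpose_le_s17 {n : Type*} [Fintype n] (X : Matrix n n ℝ) :
    ((X - Xᵀ) * (X - Xᵀ)ᵀ).trace ≤ 4 * (X * Xᵀ).trace := by
  have parallelogram : (X - Xᵀ) * (X - Xᵀ)ᵀ + (X + Xᵀ) * (X + Xᵀ)ᵀ =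
      X * Xᵀ + X * Xᵀ + (Xᵀ * X + Xᵀ * X) := by
    simp only [transpose_sub, transpose_add, transpose_transpose]
    noncomm_ring
  have h := congrArg trace parallelogram
  simp only [trace_add, trace_mul_comm Xᵀ X] at h
  linarith [trace_mul_transpose_nonneg (X + Xᵀ)]

end Matrix

section Loewner

variable {n : ℕ}

theorem LoewnerLE.trace_mul_mul_transpose_le {P Q : Matrix (Fin n) (Fin n) ℝ} (h : LoewnerLE P Q)
    {m : Type*} [Fintype m] (X : Matrix m (Fin n) ℝ) :
    (X * P * Xᵀ).trace ≤ (X * Q * Xᵀ).trace := by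
  have := (h.mul_mul_conjTranspose_same X).trace_nonneg
  rwa [conjTranspose_eq_transpose_of_trivial, Matrix.mul_sub, Matrix.sub_mul, trace_sub,
    sub_nonneg] at this

theorem LoewnerLE.posDef {c : ℝ} (hc : 0 < c) {S : Matrix (Fin n) (Fin n) ℝ}
    (h : LoewnerLE (c • 1) S) : S.PosDef := by
  simpa using (PosDef.one.smul hc).add_posSemidef h

theorem LoewnerLE.smul_le_mul_self {c : ℝ} (hc : 0 ≤ c) {S : Matrix (Fin n) (Fin n) ℝ}
    (h : LoewnerLE (c • 1) S) : LoewnerLE (c • S) (S * S) := by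
  have hS : S.PosSemidef := by simpa using (PosSemidef.one.smul hc).add h
  have := hS.mul_of_commute h ((Commute.refl S).sub_right ((Commute.one_right S).smul_right c))
  unfold LoewnerLE
  rwa [Matrix.mul_sub, mul_smul_comm, mul_one] at this

theorem LoewnerLE.mul_self_le_sq_smul {C : ℝ} {S : Matrix (Fin n) (Fin n) ℝ} (hS : S.PosSemidef)
    (h : LoewnerLE S (C • 1)) : LoewnerLE (S * S) (C ^ 2 • 1) := by
  have hCS : (C • 1 + S).PosSemidef := by
    convert h.add (hS.add hS) using 1; abel
  have hcomm : Commute (C • 1 + S) (C • 1 - S) :=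
    ((Commute.one_left _).smul_left C).add_left
      (((Commute.one_right S).smul_right C).sub_right (Commute.refl S))
  have e : C ^ 2 • 1 - S * S = (C • 1 + S) * (C • 1 - S) := by
    simp only [add_mul, mul_sub, smul_mul_assoc, mul_smul_comm, one_mul, mul_one, smul_add,
      smul_smul, sq]
    abel
  unfold LoewnerLE
  rw [e]
  exact hCS.mul_of_commute h hcomm

end Loewner

theorem fisher_defect_trace_bound_general
    {n : ℕ} (c C : ℝ) (hc : 0 < c)
    (S A : Matrix (Fin n) (Fin n) ℝ)
    (hSsymm : S.IsSymm)
    (hlow : LoewnerLE (c • (1 : Matrix (Fin n) (Fin n) ℝ)) S)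
    (hhigh : LoewnerLE S (C • (1 : Matrix (Fin n) (Fin n) ℝ))) :
    Matrix.trace ((A - S * Aᵀ * S⁻¹) * S * (A - S * Aᵀ * S⁻¹)ᵀ) ≤
      (4 * C ^ 2 / c) * Matrix.trace (A * Aᵀ) := by
  have hSpd : S.PosDef := hlow.posDef hc
  have hSt : Sᵀ = S := hSsymm
  set D := A - S * Aᵀ * S⁻¹
  have hDS : D * S = A * S - (A * S)ᵀ := by
    rw [sub_mul, mul_assoc _ S⁻¹, nonsing_inv_mul S (S.isUnit_iff_isUnit_det.mp hSpd.isUnit),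
      mul_one, transpose_mul, hSt]
  have lower : c * (D * S * Dᵀ).trace ≤ (D * S * (D * S)ᵀ).trace := by
    simpa [transpose_mul, hSt, mul_assoc, trace_smul]
      using (hlow.smul_le_mul_self hc.le).trace_mul_mul_transpose_le D
  have upper : (A * S * (A * S)ᵀ).trace ≤ C ^ 2 * (A * Aᵀ).trace := by
    simpa [transpose_mul, hSt, mul_assoc, trace_smul]
      using (LoewnerLE.mul_self_le_sq_smul hSpd.posSemidef hhigh).trace_mul_mul_transpose_le A
  have skew := trace_sub_transpose_mul_transpose_le_s17 (A * S)
  rw [← hDS] at skew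
  rw [div_mul_eq_mul_div, le_div_iff₀ hc]
  linarith

/-- pointwise bound
`tr((A − ΣAᵀΣ⁻¹) Σ (A − ΣAᵀΣ⁻¹)ᵀ) ≤ (4C²/c) tr(AAᵀ)` whenever `cI ≤ Σ ≤ CI`. -/
theorem fisher_defect_trace_bound
    {n : ℕ} (c C : ℝ) (hc : 0 < c) (hcC : c ≤ C)
    (S A : Matrix (Fin n) (Fin n) ℝ)
    (hSsymm : S.IsSymm)
    (hlow : LoewnerLE (c • (1 : Matrix (Fin n) (Fin n) ℝ)) S)
    (hhigh : LoewnerLE S (C • (1 : Matrix (Fin n) (Fin n) ℝ))) :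
    Matrix.trace ((A - S * Aᵀ * S⁻¹) * S * (A - S * Aᵀ * S⁻¹)ᵀ) ≤
      (4 * C ^ 2 / c) * Matrix.trace (A * Aᵀ) :=
  fisher_defect_trace_bound_general c C hc S A hSsymm hlow hhigh
end
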